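/- arXiv:1705.08113 — 11 statements merged into one kernel-verified Lean document; each statement's English description precedes it below -/
import Mathlib

section
/- Define B_n(q) ∈ ℤ[q] by B_0(q)=1 and B_n(q) = Σ_{k=0}^{n−1} q^k [n−1 choose k]_q B_k(q) for n≥1. Then for every n, B_n(q) = Σ_σ q^{inv(σ)}, where the sum ranges over all permutations σ ∈ S_n avoiding the dashed pattern 1-32. -/
open Polynomial

/-- The Gaussian (q-)binomial coefficient `[m choose k]_q`, as a polynomial in `ℤ[q]`,
defined via the q-Pascal recursion `[m+1,k+1] = [m,k] + q^(k+1)·[m,k+1]`. -/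
noncomputable def qbinom : ℕ → ℕ → Polynomial ℤ
  | _, 0 => 1
  | 0, _ + 1 => 0
  | m + 1, k + 1 => qbinom m k + X ^ (k + 1) * qbinom m (k + 1)

/-- The q-Bell polynomial: `B₀(q) = 1`,
`B_n(q) = Σ_{k=0}^{n−1} q^k · [n−1 choose k]_q · B_k(q)`. -/
noncomputable def qBell : ℕ → Polynomial ℤ
  | 0 => 1
  | n + 1 => ∑ k ∈ (Finset.range (n + 1)).attach,
      X ^ (k : ℕ) * qbinom n (k : ℕ) * qBell (k : ℕ)
decreasing_by
  exact Finset.mem_range.mp k.2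

/-- The number of inversions of a word:
`inv(w) = #{(i,j) : i < j, w_i > w_j}` (0-based positions). -/
def invNum (w : List ℕ) : ℕ :=
  ∑ i ∈ Finset.range w.length, ∑ j ∈ Finset.range w.length,
    if i < j ∧ w.getD j 0 < w.getD i 0 then 1 else 0

/-- `w` avoids the dashed pattern `1-32`: there are no positions `p < q` with
`w_p < w_{q+1} < w_q` (0-based positions, `q+1` within the word). -/
def Avoids1dash32 (w : List ℕ) : Prop :=
  ¬ ∃ p q, p < q ∧ q + 1 < w.length ∧
      w.getD p 0 < w.getD (q + 1) 0 ∧ w.getD (q + 1) 0 < w.getD q 0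

/-! In a `1-32`-avoiding permutation of a set `s` with least letter `m`, the letters after `m`
must increase (`m` followed by a descent is an occurrence), while the letters before `m` form
an arbitrary `1-32`-avoiding permutation of some `S ⊆ s \ {m}`; conversely each such word
avoids the pattern. Every letter of `S` is an inversion with `m`, so with `k = #S` the word
has `k` + `inv` of the prefix + the number of pairs `x ∈ S`, `y ∈ s \ ({m} ∪ S)` with `y < x`
inversions. Summed over the `k`-subsets `S`, the last statistic gives the q-binomial
`[n-1 choose k]_q` (remove the least letter and compare with the q-Pascal recursion), which is
exactly the recursion defining `B_n`. -/

open Finset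

namespace List

variable {α : Type*}

lemma getD_append_cons_length (u v : List α) (m d : α) : (u ++ m :: v).getD u.length d = m := by
  simp

lemma getD_append_cons_add (u v : List α) (m d : α) (j : ℕ) :
    (u ++ m :: v).getD (u.length + 1 + j) d = v.getD j d := by
  rw [getD_append_right _ _ _ _ (by omega), show u.length + 1 + j - u.length = j + 1 by omega,
    getD_cons_succ]

lemma getD_mem_of_lt {v : List α} {j : ℕ} (d : α) (h : j < v.length) : v.getD j d ∈ v := by
  rw [getD_eq_getElem _ _ h]
  exact getElem_mem h

lemma pairwise_le_iff_getD_le_getD_succ [Preorder α] {v : List α} (d : α) :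
    v.Pairwise (· ≤ ·) ↔ ∀ j, j + 1 < v.length → v.getD j d ≤ v.getD (j + 1) d := by
  rw [← isChain_iff_pairwise, isChain_iff_getElem]
  refine forall_congr' fun j => forall_congr' fun hj => ?_
  rw [getD_eq_getElem _ _ hj, getD_eq_getElem _ _ (Nat.lt_of_succ_lt hj)]

end List

section CrossInversions

variable {α : Type*} [LinearOrder α]

-- The inversions `(x, y)`, `x ∈ s`, `y ∈ t`, of a word whose letters `s` precede those of `t`.
def crossInv (s t : Multiset α) : ℕ := (s.map fun x => (t.filter (· < x)).card).sum

lemma crossInv_cons_left (a : α) (s t : Multiset α) :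
    crossInv (a ::ₘ s) t = (t.filter (· < a)).card + crossInv s t := by
  simp [crossInv]

lemma crossInv_cons_right {a : α} {s : Multiset α} (t : Multiset α) (h : ∀ x ∈ s, a < x) :
    crossInv s (a ::ₘ t) = crossInv s t + Multiset.card s := by
  have hx : ∀ x ∈ s, ((a ::ₘ t).filter (· < x)).card = (t.filter (· < x)).card + 1 :=
    fun x hx => by rw [Multiset.filter_cons_of_pos (p := (· < x)) _ (h x hx), Multiset.card_cons]
  simp [crossInv, Multiset.map_congr rfl hx, Multiset.sum_map_add]

variable [DecidableEq α]

theorem sum_powersetCard_X_pow_crossInv (T : Finset α) (k : ℕ) :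
    ∑ S ∈ T.powersetCard k, (X : ℤ[X]) ^ crossInv S.val (T \ S).val = qbinom #T k := by
  induction T using Finset.induction_on_min generalizing k with
  | empty => cases k <;> simp [crossInv, qbinom]
  | insert a T ha ih =>
    have haT : a ∉ T := fun h => (ha a h).false
    cases k with
    | zero => simp [crossInv, qbinom]
    | succ k =>
      have h_without : ∀ S ∈ T.powersetCard (k + 1),
          (X : ℤ[X]) ^ crossInv S.val (insert a T \ S).val =
            X ^ (k + 1) * X ^ crossInv S.val (T \ S).val := by
        intro S hS
        obtain ⟨hST, hcard⟩ := mem_powersetCard.mp hS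
        rw [insert_sdiff_of_notMem _ (fun h => haT (hST h)),
          insert_val_of_notMem (fun h => haT (mem_sdiff.mp h).1),
          crossInv_cons_right _ (fun x hx => ha x (hST hx)), card_val, hcard, pow_add, mul_comm]
      have h_with : ∀ S ∈ T.powersetCard k, (X : ℤ[X]) ^ crossInv (insert a S).val
          (insert a T \ insert a S).val = X ^ crossInv S.val (T \ S).val := by
        intro S hS
        have hST := (mem_powersetCard.mp hS).1
        have hsmall : ((T \ S).val.filter (· < a)) = 0 :=
          Multiset.filter_eq_nil.mpr fun x hx => (ha x (mem_sdiff.mp hx).1).not_gt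
        rw [insert_sdiff_insert, sdiff_insert_of_notMem haT,
          insert_val_of_notMem (fun h => haT (hST h)), crossInv_cons_left, hsmall,
          Multiset.card_zero, zero_add]
      have hdisj : Disjoint (T.powersetCard (k + 1)) ((T.powersetCard k).image (insert a)) := by
        simp only [disjoint_left, mem_image, mem_powersetCard]
        rintro _ ⟨hST, -⟩ ⟨S, -, rfl⟩
        exact haT (hST (mem_insert_self a S))
      have hinj : Set.InjOn (insert a) (T.powersetCard k : Set (Finset α)) :=
        fun S hS S' hS' h => by
        rw [← erase_insert (fun h => haT ((mem_powersetCard.mp hS).1 h)),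
          ← erase_insert (fun h => haT ((mem_powersetCard.mp hS').1 h)), h]
      rw [powersetCard_succ_insert haT, sum_union hdisj, sum_image hinj, sum_congr rfl h_without,
        sum_congr rfl h_with, ← mul_sum, ih, ih, card_insert_of_notMem haT, qbinom, add_comm]

end CrossInversions

lemma invNum_cons (a : ℕ) (w : List ℕ) :
    invNum (a :: w) = Multiset.card ((w : Multiset ℕ).filter (· < a)) + invNum w := by
  have hcount : ∀ v : List ℕ, Multiset.card ((v : Multiset ℕ).filter (· < a)) =
      ∑ j ∈ range v.length, if v.getD j 0 < a then 1 else 0 := by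
    intro v
    induction v with
    | nil => rfl
    | cons b v ih =>
      rw [← Multiset.cons_coe, List.length_cons, sum_range_succ']
      simp only [List.getD_cons_succ, List.getD_cons_zero, ← ih]
      by_cases hb : b < a
      · rw [Multiset.filter_cons_of_pos (p := (· < a)) _ hb, Multiset.card_cons, if_pos hb]
      · rw [Multiset.filter_cons_of_neg (p := (· < a)) _ hb, if_neg hb, add_zero]
  rw [hcount]
  unfold invNum
  simp only [List.length_cons, sum_range_succ', List.getD_cons_succ, List.getD_cons_zero,
    Nat.succ_lt_succ_iff, Nat.not_lt_zero, false_and, if_false, add_zero, Nat.zero_lt_succ,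
    true_and]
  rw [add_comm]

lemma invNum_append (u v : List ℕ) :
    invNum (u ++ v) = invNum u + invNum v + crossInv (u : Multiset ℕ) v := by
  induction u with
  | nil => simp [crossInv, invNum]
  | cons a u ih =>
    rw [List.cons_append, invNum_cons, invNum_cons, ih, ← Multiset.coe_add, Multiset.filter_add,
      Multiset.card_add, ← Multiset.cons_coe, crossInv_cons_left]
    ring

lemma invNum_eq_zero_of_pairwise {w : List ℕ} (h : w.Pairwise (· ≤ ·)) : invNum w = 0 := by
  induction w with
  | nil => simp [invNum]
  | cons a w ih =>
    rw [invNum_cons, ih h.of_cons, Multiset.filter_eq_nil.mpr, Multiset.card_zero]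
    exact fun x hx => (List.rel_of_pairwise_cons h hx).not_gt

lemma Avoids1dash32.of_append {u v : List ℕ} (h : Avoids1dash32 (u ++ v)) : Avoids1dash32 u := by
  rintro ⟨p, q, hpq, hq, h1, h2⟩
  refine h ⟨p, q, hpq, by rw [List.length_append]; omega, ?_⟩
  rw [List.getD_append _ _ _ _ (by omega : p < u.length), List.getD_append _ _ _ _ hq,
    List.getD_append _ _ _ _ (by omega : q < u.length)]
  exact ⟨h1, h2⟩

lemma Avoids1dash32.pairwise_le_of_append_cons {u v : List ℕ} {m : ℕ} (hv : ∀ x ∈ v, m < x)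
    (h : Avoids1dash32 (u ++ m :: v)) : v.Pairwise (· ≤ ·) := by
  rw [List.pairwise_le_iff_getD_le_getD_succ 0]
  intro j hj
  by_contra hlt
  refine h ⟨u.length, u.length + 1 + j, by omega,
    by rw [List.length_append, List.length_cons]; omega, ?_, ?_⟩ <;>
    rw [show u.length + 1 + j + 1 = u.length + 1 + (j + 1) by omega, List.getD_append_cons_add]
  · rw [List.getD_append_cons_length]
    exact hv _ (List.getD_mem_of_lt 0 hj)
  · rw [List.getD_append_cons_add]
    exact not_le.mp hlt

lemma avoids1dash32_append_cons {u v : List ℕ} {m : ℕ} (hu : ∀ x ∈ u, m < x)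
    (hv : ∀ x ∈ v, m < x) (hu' : Avoids1dash32 u) (hv' : v.Pairwise (· ≤ ·)) :
    Avoids1dash32 (u ++ m :: v) := by
  rintro ⟨p, q, hpq, hq, h1, h2⟩
  rw [List.length_append, List.length_cons] at hq
  rcases lt_trichotomy (q + 1) u.length with hlt | heq | hgt
  · refine hu' ⟨p, q, hpq, hlt, ?_⟩
    simp only [List.getD_append _ _ _ _ (by omega : p < u.length), List.getD_append _ _ _ _ hlt,
      List.getD_append _ _ _ _ (by omega : q < u.length)] at h1 h2
    exact ⟨h1, h2⟩
  · rw [heq, List.getD_append_cons_length, List.getD_append _ _ _ _ (by omega)] at h1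
    exact (hu _ (List.getD_mem_of_lt 0 (by omega))).not_gt h1
  · obtain ⟨j, rfl⟩ : ∃ j, q = u.length + j := ⟨q - u.length, by omega⟩
    cases j with
    | zero =>
      rw [show u.length + 0 + 1 = u.length + 1 + 0 by omega, List.getD_append_cons_add,
        add_zero, List.getD_append_cons_length] at h2
      exact (hv _ (List.getD_mem_of_lt 0 (by omega))).not_gt h2
    | succ j =>
      rw [show u.length + (j + 1) + 1 = u.length + 1 + (j + 1) by omega,
        show u.length + (j + 1) = u.length + 1 + j by omega, List.getD_append_cons_add,
        List.getD_append_cons_add] at h2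
      exact ((List.pairwise_le_iff_getD_le_getD_succ 0).mp hv' j (by omega)).not_gt h2

lemma avoids1dash32_append_cons_iff {u v : List ℕ} {m : ℕ} (hu : ∀ x ∈ u, m < x)
    (hv : ∀ x ∈ v, m < x) :
    Avoids1dash32 (u ++ m :: v) ↔ Avoids1dash32 u ∧ v.Pairwise (· ≤ ·) :=
  ⟨fun h => ⟨h.of_append, h.pairwise_le_of_append_cons hv⟩,
    fun h => avoids1dash32_append_cons hu hv h.1 h.2⟩

open scoped Classical in
noncomputable def avoiders (s : Finset ℕ) : Finset (List ℕ) :=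
  {w ∈ s.sort.permutations.toFinset | Avoids1dash32 w}

lemma mem_avoiders {s : Finset ℕ} {w : List ℕ} :
    w ∈ avoiders s ↔ (w : Multiset ℕ) = s.val ∧ Avoids1dash32 w := by
  simp only [avoiders, mem_filter, List.mem_toFinset, List.mem_permutations]
  rw [← Multiset.coe_eq_coe, sort_eq]

lemma mem_of_mem_avoiders {s : Finset ℕ} {w : List ℕ} (hw : w ∈ avoiders s) {x : ℕ}
    (hx : x ∈ w) : x ∈ s := by
  rw [← mem_val, ← (mem_avoiders.mp hw).1]
  exact hx

lemma invNum_append_cons_of_pairwise {u v : List ℕ} {m : ℕ} (hu : ∀ x ∈ u, m < x)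
    (hv : (m :: v).Pairwise (· ≤ ·)) :
    invNum (u ++ m :: v) = invNum u + (u.length + crossInv (u : Multiset ℕ) v) := by
  rw [invNum_append, invNum_eq_zero_of_pairwise hv, ← Multiset.cons_coe,
    crossInv_cons_right _ hu, Multiset.coe_card]
  ring

lemma append_cons_sort_mem_avoiders {m : ℕ} {S T : Finset ℕ} {u : List ℕ}
    (hm : ∀ x ∈ T, m < x) (hS : S ⊆ T) (hu : u ∈ avoiders S) :
    u ++ m :: (T \ S).sort ∈ avoiders (insert m T) := by
  obtain ⟨hu_val, hu_av⟩ := mem_avoiders.mp hu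
  have hmT : m ∉ T := fun h => (hm m h).false
  refine mem_avoiders.mpr ⟨?_, (avoids1dash32_append_cons_iff
    (fun x hx => hm x (hS (mem_of_mem_avoiders hu hx)))
    (fun x hx => hm x (mem_sdiff.mp ((mem_sort _).mp hx)).1)).mpr ⟨hu_av, pairwise_sort _ _⟩⟩
  rw [← Multiset.coe_add, ← Multiset.cons_coe, sort_eq, hu_val, insert_val_of_notMem hmT,
    Multiset.add_cons, sdiff_val, add_tsub_cancel_of_le (val_le_iff.mpr hS)]

lemma exists_eq_append_cons_sort_of_mem_avoiders {m : ℕ} {T : Finset ℕ} {w : List ℕ}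
    (hm : ∀ x ∈ T, m < x) (hw : w ∈ avoiders (insert m T)) :
    ∃ S ⊆ T, ∃ u ∈ avoiders S, w = u ++ m :: (T \ S).sort := by
  obtain ⟨hw_val, hw_av⟩ := mem_avoiders.mp hw
  have hmT : m ∉ T := fun h => (hm m h).false
  obtain ⟨u, v, rfl⟩ := List.append_of_mem
    (show m ∈ w by rw [← Multiset.mem_coe, hw_val]; exact mem_insert_self m T)
  have huv : (u : Multiset ℕ) + v = T.val := by
    rwa [← Multiset.coe_add, ← Multiset.cons_coe, Multiset.add_cons, insert_val_of_notMem hmT,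
      Multiset.cons_inj_right] at hw_val
  have hu_T : ∀ x ∈ u, x ∈ T := fun x hx => by
    rw [← mem_val, ← huv]
    exact Multiset.mem_add.mpr (Or.inl hx)
  have hv_T : ∀ x ∈ v, x ∈ T := fun x hx => by
    rw [← mem_val, ← huv]
    exact Multiset.mem_add.mpr (Or.inr hx)
  obtain ⟨hu_av, hv_sorted⟩ := (avoids1dash32_append_cons_iff (fun x hx => hm x (hu_T x hx))
    (fun x hx => hm x (hv_T x hx))).mp hw_av
  have hu_val : u.toFinset.val = u := by
    rw [List.toFinset_val, List.Nodup.dedup]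
    exact Multiset.coe_nodup.mp (Multiset.nodup_of_le (Multiset.le_add_right _ _) (huv ▸ T.nodup))
  refine ⟨u.toFinset, fun x hx => hu_T x (List.mem_toFinset.mp hx), u,
    mem_avoiders.mpr ⟨hu_val.symm, hu_av⟩, ?_⟩
  refine congrArg (fun v => u ++ m :: v)
    (List.Perm.eq_of_pairwise' hv_sorted (pairwise_sort _ _) ?_)
  rw [← Multiset.coe_eq_coe, sort_eq, sdiff_val, hu_val, ← huv, add_tsub_cancel_left]

theorem sum_avoiders_insert {m : ℕ} {T : Finset ℕ} (hm : ∀ x ∈ T, m < x) :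
    ∑ w ∈ avoiders (insert m T), (X : ℤ[X]) ^ invNum w =
      ∑ S ∈ T.powerset,
        X ^ (#S + crossInv S.val (T \ S).val) * ∑ u ∈ avoiders S, X ^ invNum u := by
  have hmT : m ∉ T := fun h => (hm m h).false
  simp_rw [mul_sum, ← pow_add]
  rw [sum_sigma']
  symm
  refine sum_nbij (fun x => x.2 ++ m :: (T \ x.1).sort) ?_ ?_ ?_ ?_
  · rintro ⟨S, u⟩ h
    rw [mem_sigma, mem_powerset] at h
    exact append_cons_sort_mem_avoiders hm h.1 h.2
  · rintro ⟨S, u⟩ h ⟨S', u'⟩ h' heq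
    simp only [coe_sigma, Set.mem_sigma_iff, mem_coe, mem_powerset] at h h'
    obtain ⟨rfl, -, -⟩ := (List.append_cons_inj_of_notMem
      (fun hmu => (hm m (h.1 (mem_of_mem_avoiders h.2 hmu))).false)
      (fun hms => hmT (mem_sdiff.mp ((mem_sort _).mp hms)).1)).mp heq
    obtain rfl : S = S' :=
      val_inj.mp ((mem_avoiders.mp h.2).1.symm.trans (mem_avoiders.mp h'.2).1)
    rfl
  · intro w hw
    obtain ⟨S, hS, u, hu, rfl⟩ := exists_eq_append_cons_sort_of_mem_avoiders hm hw
    exact ⟨⟨S, u⟩, mem_sigma.mpr ⟨mem_powerset.mpr hS, hu⟩, rfl⟩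
  · rintro ⟨S, u⟩ h
    obtain ⟨hS, hu⟩ : S ⊆ T ∧ u ∈ avoiders S := by rwa [mem_sigma, mem_powerset] at h
    have hu_val := (mem_avoiders.mp hu).1
    have hlen : u.length = #S := by rw [← Multiset.coe_card, hu_val, card_val]
    dsimp only
    rw [invNum_append_cons_of_pairwise (fun x hx => hm x (hS (mem_of_mem_avoiders hu hx)))
      (List.pairwise_cons.mpr ⟨fun x hx => (hm x (mem_sdiff.mp ((mem_sort _).mp hx)).1).le,
        pairwise_sort _ _⟩), hu_val, sort_eq, hlen]
    ring

lemma qBell_succ (n : ℕ) :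
    qBell (n + 1) = ∑ k ∈ range (n + 1), X ^ k * qbinom n k * qBell k := by
  rw [qBell, sum_attach (range (n + 1)) fun k => X ^ k * qbinom n k * qBell k]

theorem sum_avoiders_eq_qBell (s : Finset ℕ) :
    ∑ w ∈ avoiders s, (X : ℤ[X]) ^ invNum w = qBell #s := by
  induction s using Finset.strongInduction with
  | H s ih =>
  rcases s.eq_empty_or_nonempty with rfl | hs
  · have : avoiders ∅ = {[]} := by
      ext w
      simp only [mem_avoiders, mem_singleton, empty_val, Multiset.coe_eq_zero]
      refine ⟨And.left, fun hw => ⟨hw, ?_⟩⟩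
      rintro ⟨p, q, -, hq, -⟩
      simp [hw] at hq
    simp [this, invNum, qBell]
  · set m := s.min' hs
    set T := s.erase m
    have hm : ∀ x ∈ T, m < x := fun x hx => s.min'_lt_of_mem_erase_min' hs hx
    have hTs : T ⊂ s := erase_ssubset (s.min'_mem hs)
    rw [← insert_erase (s.min'_mem hs), sum_avoiders_insert hm,
      card_insert_of_notMem (notMem_erase m s), qBell_succ, sum_powerset]
    refine sum_congr rfl fun k _ => ?_
    rw [mul_assoc, mul_comm _ (qBell k), ← mul_assoc, ← sum_powersetCard_X_pow_crossInv T k,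
      mul_sum]
    refine sum_congr rfl fun S hS => ?_
    obtain ⟨hST, rfl⟩ := mem_powersetCard.mp hS
    rw [ih S (hST.trans_ssubset hTs), pow_add]
    ring

/-- `B_n(q) = Σ_σ q^(inv σ)`, the sum being over all permutations of `{1,…,n}`
(written as words) avoiding the dashed pattern `1-32`. -/
theorem qBell_eq_sum_inv_avoiders (n : ℕ) :
    qBell n =
      ∑ᶠ w ∈ {w : List ℕ | w.Perm ((List.range n).map (· + 1)) ∧ Avoids1dash32 w},
        (X : Polynomial ℤ) ^ invNum w := by
  set l := (List.range n).map (· + 1)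
  have hl : l.Nodup := (List.nodup_range).map (add_left_injective 1)
  have hval : l.toFinset.val = l := by rw [List.toFinset_val, hl.dedup]
  have hset : {w : List ℕ | w.Perm l ∧ Avoids1dash32 w} = avoiders l.toFinset := by
    ext w
    rw [mem_coe, mem_avoiders, hval, Multiset.coe_eq_coe, Set.mem_ofPred_eq]
  rw [hset, finsum_mem_coe_finset, sum_avoiders_eq_qBell, List.toFinset_card_of_nodup hl,
    List.length_map, List.length_range]
end

section
/- Let I=(i_1,…,i_r) be a composition of n. The map π ↦ π̂ is a bijection from the set of set partitions π of {1,…,n} with K(π)=I onto the set of permutations σ ∈ S_n that factor as σ = u_1 u_2 ⋯ u_r, where each u_j is a strictly increasing word of length i_j whose last letter is greater than every letter appearing to its right in σ. Moreover, every such permutation σ has descent composition C(σ)=I. -/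
/-- `π` is a set partition of `{1,…,n}`. -/
def IsSetPartitionOn (n : ℕ) (π : Finset (Finset ℕ)) : Prop :=
  (∀ B ∈ π, B.Nonempty) ∧
  (∀ B ∈ π, ∀ C ∈ π, B ≠ C → Disjoint B C) ∧
  (∀ x, x ∈ Finset.Icc 1 n ↔ ∃ B ∈ π, x ∈ B)

/-- Insert a block into a list of blocks sorted by decreasing maxima. -/
def insertByMax (B : Finset ℕ) : List (Finset ℕ) → List (Finset ℕ)
  | [] => [B]
  | C :: L => if C.max ≤ B.max then B :: C :: L else C :: insertByMax B L

/-- Sort a list of blocks by decreasing maxima. -/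
def sortByMax : List (Finset ℕ) → List (Finset ℕ)
  | [] => []
  | B :: L => insertByMax B (sortByMax L)

/-- The blocks of `π`, listed so that their maxima decrease. -/
noncomputable def blocksByMax (π : Finset (Finset ℕ)) : List (Finset ℕ) :=
  sortByMax π.toList

/-- `K(π)`: the composition formed by the block sizes of `π`, the blocks being ordered
so that their maxima decrease. -/
noncomputable def Kcomp (π : Finset (Finset ℕ)) : List ℕ :=
  (blocksByMax π).map Finset.card

/-- `π̂`: the word obtained by concatenating the blocks of `π` (ordered by decreasing
maxima), each block being listed increasingly. -/
noncomputable def hatWord (π : Finset (Finset ℕ)) : List ℕ :=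
  ((blocksByMax π).map (fun B => B.sort (· ≤ ·))).flatten

/-- The descent set of a word (with 1-based positions): `{i : 1 ≤ i ≤ n−1, wᵢ > wᵢ₊₁}`. -/
def desSet (w : List ℕ) : Finset ℕ :=
  (Finset.range w.length).filter (fun i => 0 < i ∧ w.getD i 0 < w.getD (i - 1) 0)

/-- The set of proper partial sums `i₁, i₁+i₂, …, i₁+⋯+i_{r−1}` of a composition:
having descent composition `I` means having this set as descent set. -/
def properSums (I : List ℕ) : Finset ℕ :=
  ((List.range (I.length - 1)).map (fun j => (I.take (j + 1)).sum)).toFinset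

/-- `w` factors as `u₁u₂⋯u_r` where `u_j` is a strictly increasing word of length `i_j`
whose last letter is greater than every letter to its right in `w`. -/
def GoodFact (I : List ℕ) (w : List ℕ) : Prop :=
  ∃ us : List (List ℕ), us.flatten = w ∧ us.map List.length = I ∧
    (∀ u ∈ us, u.Chain' (· < ·)) ∧
    (∀ j < us.length, ∀ l, (us.getD j []).getLast? = some l →
      ∀ x ∈ (us.drop (j + 1)).flatten, x < l)

/-!
Listing the blocks of `π` by decreasing maxima, each block increasingly, cuts `π̂` into
increasing factors; the last letter of each factor is the maximum of its block, and it exceeds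
every later letter because all later blocks have smaller maxima. Conversely, the factors of any
such factorization of a permutation are the blocks of a set partition, and the condition on
their last letters says exactly that they are listed by decreasing maxima; together with the
lengths `I` this recovers `π` from `π̂`. There is no descent inside a factor, and there is one at
each junction since the last letter of a factor exceeds the first letter of the next, so the
descents sit at the partial sums of `I`.
-/

lemma sortByMax_eq_insertionSort (L : List (Finset ℕ)) :
    sortByMax L = L.insertionSort (fun B C => C.max ≤ B.max) := by
  have insert_eq (B : Finset ℕ) (M : List (Finset ℕ)) :
      insertByMax B M = M.orderedInsert (fun B C => C.max ≤ B.max) B := by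
    induction M with
    | nil => rfl
    | cons C M ih => simp [insertByMax, ih]
  induction L with
  | nil => rfl
  | cons B L ih => simp [sortByMax, insert_eq, ih]

lemma blocksByMax_perm (π : Finset (Finset ℕ)) : (blocksByMax π).Perm π.toList := by
  rw [blocksByMax, sortByMax_eq_insertionSort]
  exact List.perm_insertionSort _ _

lemma blocksByMax_pairwise_max_le (π : Finset (Finset ℕ)) :
    (blocksByMax π).Pairwise (fun B C => C.max ≤ B.max) := by
  have : Std.Total (fun B C : Finset ℕ => C.max ≤ B.max) := ⟨fun B C => le_total C.max B.max⟩
  have : IsTrans (Finset ℕ) (fun B C => C.max ≤ B.max) := ⟨fun _ _ _ h₁ h₂ => h₂.trans h₁⟩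
  rw [blocksByMax, sortByMax_eq_insertionSort]
  exact List.pairwise_insertionSort _ _

@[simp]
lemma mem_blocksByMax {π : Finset (Finset ℕ)} {B : Finset ℕ} : B ∈ blocksByMax π ↔ B ∈ π := by
  rw [(blocksByMax_perm π).mem_iff, Finset.mem_toList]

@[simp]
lemma toFinset_blocksByMax (π : Finset (Finset ℕ)) : (blocksByMax π).toFinset = π := by
  ext B; simp

lemma blocksByMax_toFinset {L : List (Finset ℕ)} (hL : L.Pairwise (fun B C => C.max < B.max)) :
    blocksByMax L.toFinset = L := by
  have : Std.Symm (fun B C : Finset ℕ => B.max ≠ C.max) := ⟨fun _ _ h => h.symm⟩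
  have hmax_ne : L.Pairwise (fun B C => B.max ≠ C.max) := hL.imp fun h => h.ne'
  have hperm : (blocksByMax L.toFinset).Perm L :=
    (blocksByMax_perm _).trans (List.toFinset_toList (hmax_ne.imp (ne_of_apply_ne _)))
  refine hperm.eq_of_pairwise (fun B C hB hC h₁ h₂ => ?_) (blocksByMax_pairwise_max_le _)
    (hL.imp le_of_lt)
  by_contra hBC
  exact hmax_ne.forall (hperm.subset hB) hC hBC (le_antisymm h₂ h₁)

section SortedBlocks

variable {L : List (Finset ℕ)}

lemma mem_flatten_map_sort {x : ℕ} : x ∈ (L.map (·.sort)).flatten ↔ ∃ B ∈ L, x ∈ B := by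
  simp

lemma nodup_flatten_map_sort : (L.map (·.sort)).flatten.Nodup ↔ L.Pairwise Disjoint := by
  have sort_nodup : ∀ u ∈ L.map (·.sort), u.Nodup := by
    simp only [List.mem_map]
    rintro u ⟨B, -, rfl⟩
    exact B.sort_nodup _
  rw [List.nodup_flatten, List.pairwise_map, and_iff_right sort_nodup]
  refine List.Pairwise.iff fun B C => ?_
  simp [List.Disjoint, Finset.disjoint_left]

lemma map_toFinset_map_sort : (L.map (·.sort)).map List.toFinset = L := by
  simp [Function.comp_def]

lemma map_sort_map_toFinset {us : List (List ℕ)} (h : ∀ u ∈ us, u.SortedLT) :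
    (us.map List.toFinset).map (·.sort) = us := by
  rw [List.map_map]
  refine (List.map_congr_left fun u hu => ?_).trans (List.map_id us)
  exact (List.toFinset_sort _ (h u hu).nodup).2 (h u hu).sortedLE.pairwise

end SortedBlocks

def LastExceeds (u v : List ℕ) : Prop := ∀ l ∈ u.getLast?, ∀ x ∈ v, x < l

lemma lastExceeds_sort_iff {B C : Finset ℕ} (hB : B.Nonempty) :
    LastExceeds B.sort C.sort ↔ C.max < B.max := by
  have hlast : B.sort.getLast? = some (B.max' hB) := by
    have hne : B.sort ≠ [] := by simpa [← List.length_pos_iff] using hB.card_pos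
    rw [List.getLast?_eq_some_getLast hne, List.getLast_eq_getElem, Finset.max'_eq_sorted_last]
  rw [← Finset.coe_max' hB, Finset.max_eq_sup_withBot, Finset.sup_lt_iff (WithBot.bot_lt_coe _)]
  simp [LastExceeds, hlast]

lemma getLast_tail_iff_pairwise_lastExceeds {us : List (List ℕ)} :
    (∀ j < us.length, ∀ l, (us.getD j []).getLast? = some l →
      ∀ x ∈ (us.drop (j + 1)).flatten, x < l) ↔ us.Pairwise LastExceeds := by
  simp only [List.pairwise_iff_getElem, LastExceeds, Option.mem_def, List.mem_flatten]
  constructor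
  · rintro h i j hi hj hij l hl x hx
    refine h i hi l (by rwa [List.getD_eq_getElem _ _ hi]) x ⟨us[j], ?_, hx⟩
    exact List.mem_iff_getElem.2 ⟨j - (i + 1), by simp; omega, by simp; congr 1; omega⟩
  · rintro h j hj l hl x ⟨v, hv, hx⟩
    obtain ⟨k, hk, rfl⟩ := List.mem_iff_getElem.1 hv
    rw [List.getD_eq_getElem _ _ hj] at hl
    rw [List.getElem_drop] at hx
    exact h j (j + 1 + k) hj (by simp at hk; omega) (by omega) l hl x hx

lemma goodFact_iff {I w : List ℕ} :
    GoodFact I w ↔ ∃ us : List (List ℕ), us.flatten = w ∧ us.map List.length = I ∧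
      (∀ u ∈ us, u.SortedLT) ∧ us.Pairwise LastExceeds := by
  simp only [GoodFact, getLast_tail_iff_pairwise_lastExceeds, List.sortedLT_iff_isChain]
  rfl

structure IsOrderedSetPartitionOn (n : ℕ) (L : List (Finset ℕ)) : Prop where
  nonempty : ∀ B ∈ L, B.Nonempty
  pairwise_disjoint : L.Pairwise Disjoint
  pairwise_max_lt : L.Pairwise (fun B C => C.max < B.max)
  mem_Icc_iff : ∀ x, x ∈ Finset.Icc 1 n ↔ ∃ B ∈ L, x ∈ B

lemma IsSetPartitionOn.isOrderedSetPartitionOn_blocksByMax {n : ℕ} {π : Finset (Finset ℕ)}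
    (hπ : IsSetPartitionOn n π) : IsOrderedSetPartitionOn n (blocksByMax π) := by
  obtain ⟨hne, hdisj, hcover⟩ := hπ
  have hpairwise : (blocksByMax π).Pairwise Disjoint := by
    refine ((blocksByMax_perm π).pairwise_iff fun h => h.symm).2 ?_
    exact (Finset.nodup_toList π).imp_of_mem fun hB hC =>
      hdisj _ (Finset.mem_toList.1 hB) _ (Finset.mem_toList.1 hC)
  refine ⟨fun B hB => hne B (mem_blocksByMax.1 hB), hpairwise, ?_, by simpa using hcover⟩
  -- disjoint nonempty blocks have distinct maxima, so the weak order by maxima is strict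
  refine ((blocksByMax_pairwise_max_le π).and hpairwise).imp_of_mem fun hB _ ⟨hle, hd⟩ =>
    hle.lt_of_ne fun heq => ?_
  obtain ⟨m, hm⟩ := Finset.max_of_nonempty (hne _ (mem_blocksByMax.1 hB))
  exact Finset.disjoint_left.1 hd (Finset.mem_of_max hm) (Finset.mem_of_max (heq ▸ hm))

lemma IsOrderedSetPartitionOn.isSetPartitionOn_toFinset {n : ℕ} {L : List (Finset ℕ)}
    (hL : IsOrderedSetPartitionOn n L) : IsSetPartitionOn n L.toFinset := by
  have : Std.Symm (α := Finset ℕ) Disjoint := ⟨fun _ _ h => h.symm⟩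
  refine ⟨fun B hB => hL.nonempty B (List.mem_toFinset.1 hB), fun B hB C hC hBC => ?_,
    by simpa using hL.mem_Icc_iff⟩
  exact hL.pairwise_disjoint.forall (List.mem_toFinset.1 hB) (List.mem_toFinset.1 hC) hBC

lemma bijOn_blocksByMax (n : ℕ) (I : List ℕ) :
    Set.BijOn blocksByMax {π | IsSetPartitionOn n π ∧ Kcomp π = I}
      {L | IsOrderedSetPartitionOn n L ∧ L.map Finset.card = I} := by
  refine ⟨fun π ⟨hπ, hK⟩ => ⟨hπ.isOrderedSetPartitionOn_blocksByMax, hK⟩,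
    fun π₁ _ π₂ _ h => ?_, fun L ⟨hL, hI⟩ => ⟨L.toFinset, ⟨hL.isSetPartitionOn_toFinset, ?_⟩, ?_⟩⟩
  · rw [← toFinset_blocksByMax π₁, h, toFinset_blocksByMax]
  · rw [Kcomp, blocksByMax_toFinset hL.pairwise_max_lt, hI]
  · exact blocksByMax_toFinset hL.pairwise_max_lt

lemma perm_map_succ_range_iff {w : List ℕ} {n : ℕ} :
    w.Perm ((List.range n).map (· + 1)) ↔ w.Nodup ∧ ∀ x, x ∈ w ↔ x ∈ Finset.Icc 1 n := by
  have hnodup : ((List.range n).map (· + 1)).Nodup := List.nodup_range.map (add_left_injective 1)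
  have hmem (x : ℕ) : x ∈ (List.range n).map (· + 1) ↔ x ∈ Finset.Icc 1 n := by
    simp only [List.mem_map, List.mem_range, Finset.mem_Icc]
    exact ⟨by rintro ⟨y, hy, rfl⟩; omega, fun h => ⟨x - 1, by omega, by omega⟩⟩
  simp only [← hmem]
  exact ⟨fun h => ⟨h.nodup_iff.2 hnodup, fun x => h.mem_iff⟩,
    fun ⟨hw, h⟩ => (List.perm_ext_iff_of_nodup hw hnodup).2 h⟩

lemma goodFact_flatten_map_sort {L : List (Finset ℕ)} (hne : ∀ B ∈ L, B.Nonempty)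
    (hL : L.Pairwise (fun B C => C.max < B.max)) :
    GoodFact (L.map Finset.card) (L.map (·.sort)).flatten := by
  refine goodFact_iff.2 ⟨_, rfl, by simp [Function.comp_def], ?_, ?_⟩
  · simp only [List.mem_map]
    rintro u ⟨B, -, rfl⟩
    exact B.sortedLT_sort
  · exact List.pairwise_map.2 (hL.imp_of_mem fun hB _ h => (lastExceeds_sort_iff (hne _ hB)).2 h)

lemma bijOn_flatten_map_sort (n : ℕ) {I : List ℕ} (hI : ∀ i ∈ I, 0 < i) :
    Set.BijOn (fun L => (L.map (·.sort)).flatten)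
      {L | IsOrderedSetPartitionOn n L ∧ L.map Finset.card = I}
      {w | w.Perm ((List.range n).map (· + 1)) ∧ GoodFact I w} := by
  refine ⟨fun L ⟨hL, hcard⟩ => ?_, fun L₁ ⟨_, hcard₁⟩ L₂ ⟨_, hcard₂⟩ h => ?_,
    fun w ⟨hw, hfact⟩ => ?_⟩
  · refine ⟨perm_map_succ_range_iff.2 ⟨nodup_flatten_map_sort.2 hL.pairwise_disjoint,
      fun x => by rw [mem_flatten_map_sort, hL.mem_Icc_iff]⟩, ?_⟩
    rw [← hcard]
    exact goodFact_flatten_map_sort hL.nonempty hL.pairwise_max_lt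
  · have hsort : L₁.map (·.sort) = L₂.map (·.sort) :=
      List.eq_iff_flatten_eq.2 ⟨h, by simp [Function.comp_def, hcard₁, hcard₂]⟩
    rw [← map_toFinset_map_sort (L := L₁), hsort, map_toFinset_map_sort]
  · obtain ⟨us, rfl, hlen, hsorted, hlast⟩ := goodFact_iff.1 hfact
    obtain ⟨L, rfl⟩ : ∃ L : List (Finset ℕ), L.map (·.sort) = us :=
      ⟨_, map_sort_map_toFinset hsorted⟩
    obtain ⟨hnodup, hmem⟩ := perm_map_succ_range_iff.1 hw
    have hcard : L.map Finset.card = I := by simpa [Function.comp_def] using hlen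
    have hne : ∀ B ∈ L, B.Nonempty := fun B hB =>
      Finset.card_pos.1 (hI _ (hcard ▸ List.mem_map_of_mem hB))
    refine ⟨L, ⟨⟨hne, nodup_flatten_map_sort.1 hnodup, ?_, ?_⟩, hcard⟩, rfl⟩
    · exact (List.pairwise_map.1 hlast).imp_of_mem fun hB _ h =>
        (lastExceeds_sort_iff (hne _ hB)).1 h
    · intro x
      rw [← hmem, mem_flatten_map_sort]

lemma desSet_eq_empty_of_sortedLT {u : List ℕ} (hu : u.SortedLT) : desSet u = ∅ := by
  ext i
  simp only [desSet, Finset.mem_filter, Finset.mem_range, Finset.notMem_empty, iff_false]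
  rintro ⟨hi, hpos, hlt⟩
  rw [List.getD_eq_getElem _ _ hi, List.getD_eq_getElem _ _ (by omega)] at hlt
  exact hlt.not_gt (hu.getElem_lt_getElem_of_lt (by omega))

lemma desSet_append {u w : List ℕ} (hu : u.SortedLT) (hu0 : u ≠ []) (hw0 : w ≠ [])
    (huw : LastExceeds u w) :
    desSet (u ++ w) = insert u.length ((desSet w).image (· + u.length)) := by
  have hupos : 0 < u.length := List.length_pos_iff.2 hu0
  have hwpos : 0 < w.length := List.length_pos_iff.2 hw0
  have hjunction : w.getD 0 0 < u.getD (u.length - 1) 0 := by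
    rw [List.getD_eq_getElem _ _ hwpos, List.getD_eq_getElem _ _ (by omega),
      ← List.getLast_eq_getElem hu0]
    exact huw _ (List.getLast?_eq_some_getLast hu0) _ (List.getElem_mem _)
  ext i
  simp only [desSet, Finset.mem_filter, Finset.mem_range, Finset.mem_insert, Finset.mem_image,
    List.length_append]
  rcases lt_trichotomy i u.length with h | rfl | h
  · constructor
    · rintro ⟨-, hpos, hlt⟩
      rw [List.getD_append _ _ _ _ h, List.getD_append _ _ _ _ (by omega),
        List.getD_eq_getElem _ _ h, List.getD_eq_getElem _ _ (by omega)] at hlt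
      exact absurd hlt (hu.getElem_lt_getElem_of_lt (by omega)).not_gt
    · rintro (rfl | ⟨j, -, rfl⟩) <;> omega
  · rw [List.getD_append_right _ _ _ _ le_rfl, Nat.sub_self,
      List.getD_append _ _ _ _ (by omega : u.length - 1 < u.length)]
    simp only [true_or, iff_true]
    exact ⟨by omega, hupos, hjunction⟩
  · rw [List.getD_append_right _ _ _ _ h.le, List.getD_append_right _ _ _ _ (by omega)]
    constructor
    · rintro ⟨hi, -, hlt⟩
      exact Or.inr ⟨i - u.length, ⟨by omega, by omega, by rwa [Nat.sub_right_comm]⟩, by omega⟩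
    · rintro (h' | ⟨j, ⟨hj, hj0, hlt⟩, rfl⟩)
      · omega
      · refine ⟨by omega, by omega, ?_⟩
        rwa [Nat.add_sub_cancel, Nat.sub_right_comm, Nat.add_sub_cancel]

lemma properSums_cons (k : ℕ) {I : List ℕ} (hI : I ≠ []) :
    properSums (k :: I) = insert k ((properSums I).image (· + k)) := by
  have hlen : 0 < I.length := List.length_pos_iff.2 hI
  ext x
  simp only [properSums, List.mem_toFinset, List.mem_map, List.mem_range, Finset.mem_insert,
    Finset.mem_image, List.length_cons]
  constructor
  · rintro ⟨_ | j, hj, rfl⟩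
    · simp
    · exact Or.inr ⟨_, ⟨j, by omega, rfl⟩, by rw [List.take_succ_cons, List.sum_cons, add_comm]⟩
  · rintro (rfl | ⟨_, ⟨j, hj, rfl⟩, rfl⟩)
    · exact ⟨0, by omega, by simp⟩
    · exact ⟨j + 1, by omega, by rw [List.take_succ_cons, List.sum_cons, add_comm]⟩

lemma desSet_flatten {us : List (List ℕ)} (hne : ∀ u ∈ us, u ≠ [])
    (hsorted : ∀ u ∈ us, u.SortedLT) (hlast : us.Pairwise LastExceeds) :
    desSet us.flatten = properSums (us.map List.length) := by
  induction us with
  | nil => rfl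
  | cons u vs ih =>
    rcases vs with _ | ⟨v, vs⟩
    · simp [desSet_eq_empty_of_sortedLT (hsorted u (by simp)), properSums]
    · simp only [List.forall_mem_cons] at hne hsorted
      obtain ⟨hu_last, hvs_last⟩ := List.pairwise_cons.1 hlast
      have hu_tail : LastExceeds u (v :: vs).flatten := fun l hl x hx => by
        obtain ⟨v', hv', hx'⟩ := List.mem_flatten.1 hx
        exact hu_last v' hv' l hl x hx'
      rw [List.flatten_cons, desSet_append hsorted.1 hne.1 (by simp [hne.2.1]) hu_tail,
        ih (by simpa using hne.2) (by simpa using hsorted.2) hvs_last,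
        List.map_cons (f := List.length) (a := u), properSums_cons u.length (by simp)]

lemma desSet_eq_properSums_of_goodFact {I w : List ℕ} (hI : ∀ i ∈ I, 0 < i)
    (hw : GoodFact I w) : desSet w = properSums I := by
  obtain ⟨us, rfl, rfl, hsorted, hlast⟩ := goodFact_iff.1 hw
  refine desSet_flatten (fun u hu => ?_) hsorted hlast
  exact List.ne_nil_of_length_pos (hI _ (List.mem_map_of_mem hu))

/-- The map `π ↦ π̂` is a bijection from set partitions of `{1,…,n}` with `K(π) = I`
onto permutations of `{1,…,n}` admitting a good factorization of type `I`; moreover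
every such permutation has descent composition `I`. -/
theorem hatWord_bijection (I : List ℕ) (hI : ∀ i ∈ I, 0 < i) :
    Set.BijOn hatWord
      {π : Finset (Finset ℕ) | IsSetPartitionOn I.sum π ∧ Kcomp π = I}
      {w : List ℕ | w.Perm ((List.range I.sum).map (· + 1)) ∧ GoodFact I w} ∧
    (∀ w : List ℕ, w.Perm ((List.range I.sum).map (· + 1)) → GoodFact I w →
      desSet w = properSums I) :=
  ⟨(bijOn_flatten_map_sort I.sum hI).comp (bijOn_blocksByMax I.sum I),
    fun _ _ hw => desSet_eq_properSums_of_goodFact hI hw⟩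
end

section
/- A permutation σ ∈ S_n admits a factorization σ = u_1 u_2 ⋯ u_r (for some r ≥ 1 and some lengths) into strictly increasing words u_j each of whose last letter is greater than every letter appearing to its right in σ, if and only if σ avoids the dashed pattern 21-3. -/
/-!
Cut the word after every position `p` with `σ(p) > σ(p+1)`; the pieces are the maximal
increasing runs, so a factorization of the required kind exists exactly when every such
descent top `σ(p)` exceeds all letters after position `p + 1`. Since the letters of a
permutation are distinct, that says no later letter exceeds `σ(p)`, which is the absence
of an occurrence of `21-3`.
-/

/-- `w` avoids the dashed pattern `21-3`: there are no positions `p, q` with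
`q ≥ p + 2` and `w_{p+1} < w_p < w_q` (0-based positions). -/
def Avoids21dash3 (w : List ℕ) : Prop :=
  ¬ ∃ p q, p + 2 ≤ q ∧ q < w.length ∧
      w.getD (p + 1) 0 < w.getD p 0 ∧ w.getD p 0 < w.getD q 0

namespace List

section Factorization

variable {α : Type*} [LT α]

def IsDominantRunFactorization (us : List (List α)) : Prop :=
  (∀ u ∈ us, u ≠ []) ∧ (∀ u ∈ us, u.IsChain (· < ·)) ∧
    (∀ j < us.length, ∀ l, (us.getD j []).getLast? = some l →
      ∀ x ∈ (us.drop (j + 1)).flatten, x < l)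

/-- Phrased with `¬ a < b` rather than `b < a` so that it matches the factorizations for every
word, including words with repeated letters. -/
def NonAscentTopsDominate (w : List α) : Prop :=
  ∀ t₁ a b t₂, w = t₁ ++ a :: b :: t₂ → ¬ a < b → ∀ c ∈ b :: t₂, c < a

theorem isDominantRunFactorization_nil : IsDominantRunFactorization ([] : List (List α)) := by
  simp [IsDominantRunFactorization]

theorem isDominantRunFactorization_cons {u : List α} {us : List (List α)} :
    IsDominantRunFactorization (u :: us) ↔
      u ≠ [] ∧ u.IsChain (· < ·) ∧ (∀ l ∈ u.getLast?, ∀ x ∈ us.flatten, x < l) ∧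
        IsDominantRunFactorization us := by
  simp only [IsDominantRunFactorization, forall_mem_cons, length_cons, Nat.forall_lt_succ_left,
    getD_cons_zero, getD_cons_succ, drop_succ_cons, drop_zero, Option.mem_def]
  tauto

theorem nonAscentTopsDominate_nil : NonAscentTopsDominate ([] : List α) := by
  intro t₁ a b t₂ h
  simp at h

theorem nonAscentTopsDominate_cons {a : α} {w : List α} :
    NonAscentTopsDominate (a :: w) ↔
      (∀ b ∈ w.head?, ¬ a < b → ∀ c ∈ w, c < a) ∧ NonAscentTopsDominate w := by
  constructor
  · intro h
    refine ⟨fun b hb => ?_, fun t₁ x y t₂ hw => h (a :: t₁) x y t₂ (by simp [hw])⟩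
    cases w with
    | nil => cases hb
    | cons b' t =>
      obtain rfl : b' = b := Option.some.inj hb
      exact h [] a b' t rfl
  · rintro ⟨hhead, htail⟩ (_ | ⟨x, t₁⟩) a' b t₂ hw
    · obtain ⟨rfl, rfl⟩ := cons_eq_cons.mp hw
      exact hhead b rfl
    · obtain ⟨-, rfl⟩ := cons_eq_cons.mp hw
      exact htail t₁ a' b t₂ rfl

theorem NonAscentTopsDominate.run_append {u w : List α} (hu : u ≠ [])
    (hchain : u.IsChain (· < ·)) (hlast : ∀ l ∈ u.getLast?, ∀ x ∈ w, x < l)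
    (hw : NonAscentTopsDominate w) : NonAscentTopsDominate (u ++ w) := by
  induction u with
  | nil => exact absurd rfl hu
  | cons a u ih =>
    rw [cons_append, nonAscentTopsDominate_cons]
    cases u with
    | nil => exact ⟨fun _ _ _ c hc => hlast a rfl c hc, hw⟩
    | cons b u =>
      have hab : a < b := (isChain_cons_cons.mp hchain).1
      refine ⟨fun b' hb' hnot => ?_, ?_⟩
      · obtain rfl : b = b' := Option.some.inj hb'
        exact absurd hab hnot
      · exact ih (cons_ne_nil _ _) (isChain_cons_cons.mp hchain).2
          (by simpa [getLast?_cons_cons] using hlast)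

theorem IsDominantRunFactorization.nonAscentTopsDominate_flatten {us : List (List α)}
    (h : IsDominantRunFactorization us) : NonAscentTopsDominate us.flatten := by
  induction us with
  | nil => exact nonAscentTopsDominate_nil
  | cons u us ih =>
    obtain ⟨hu, hchain, hlast, hus⟩ := isDominantRunFactorization_cons.mp h
    exact (ih hus).run_append hu hchain hlast

theorem NonAscentTopsDominate.exists_isDominantRunFactorization {w : List α}
    (h : NonAscentTopsDominate w) :
    ∃ us : List (List α), us.flatten = w ∧ IsDominantRunFactorization us := by
  induction w with
  | nil => exact ⟨[], rfl, isDominantRunFactorization_nil⟩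
  | cons a w ih =>
    obtain ⟨hhead, hw⟩ := nonAscentTopsDominate_cons.mp h
    obtain ⟨us, rfl, hfact⟩ := ih hw
    cases us with
    | nil => exact ⟨[[a]], rfl, by simp [IsDominantRunFactorization]⟩
    | cons u us =>
      obtain ⟨hu, hchain, hlast, hus⟩ := isDominantRunFactorization_cons.mp hfact
      obtain ⟨b, u, rfl⟩ := exists_cons_of_ne_nil hu
      by_cases hab : a < b
      · refine ⟨(a :: b :: u) :: us, rfl, isDominantRunFactorization_cons.mpr
          ⟨cons_ne_nil _ _, isChain_cons_cons.mpr ⟨hab, hchain⟩, ?_, hus⟩⟩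
        simpa [getLast?_cons_cons] using hlast
      · refine ⟨[a] :: (b :: u) :: us, rfl, isDominantRunFactorization_cons.mpr
          ⟨cons_ne_nil _ _, isChain_singleton a, ?_, ?_⟩⟩
        · simpa using hhead b rfl hab
        · exact hfact

theorem exists_isDominantRunFactorization_iff {w : List α} :
    (∃ us : List (List α), us.flatten = w ∧ IsDominantRunFactorization us) ↔
      NonAscentTopsDominate w := by
  constructor
  · rintro ⟨us, rfl, h⟩
    exact h.nonAscentTopsDominate_flatten
  · exact NonAscentTopsDominate.exists_isDominantRunFactorization

end Factorization

theorem nonAscentTopsDominate_iff_of_nodup {α : Type*} [LinearOrder α] {w : List α}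
    (hw : w.Nodup) :
    NonAscentTopsDominate w ↔
      ∀ t₁ a b t₂, w = t₁ ++ a :: b :: t₂ → b < a → ∀ c ∈ t₂, c ≤ a := by
  constructor
  · intro h t₁ a b t₂ hsplit hba c hc
    exact (h t₁ a b t₂ hsplit (not_lt.mpr hba.le) c (mem_cons_of_mem b hc)).le
  · rintro h t₁ a b t₂ rfl hab c hc
    have ha : a ∉ b :: t₂ := (nodup_cons.mp (hw.sublist (sublist_append_right t₁ _))).1
    have hba : b < a := lt_of_le_of_ne (not_lt.mp hab) fun hb => ha (hb ▸ mem_cons_self)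
    rcases mem_cons.mp hc with rfl | hc
    · exact hba
    · exact lt_of_le_of_ne (h t₁ a b t₂ rfl hba c hc) fun hc' => ha (hc' ▸ mem_cons_of_mem b hc)

end List

open List

theorem avoids21dash3_iff {w : List ℕ} :
    Avoids21dash3 w ↔ ∀ t₁ a b t₂, w = t₁ ++ a :: b :: t₂ → b < a → ∀ c ∈ t₂, c ≤ a := by
  simp only [Avoids21dash3, not_exists, not_and, not_lt]
  constructor
  · rintro h t₁ a b t₂ rfl hba c hc
    obtain ⟨s, s', rfl⟩ := append_of_mem hc
    simpa using h t₁.length (t₁.length + (s.length + 2)) (by omega) (by simp)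
      (by simpa using hba)
  · intro h p q hpq hq hdesc
    have hp : p + 1 < w.length := by omega
    have hsplit : w = w.take p ++ w[p] :: w[p + 1] :: w.drop (p + 2) := by
      rw [← drop_eq_getElem_cons, ← drop_eq_getElem_cons, take_append_drop]
    have hmem : w[q] ∈ w.drop (p + 2) :=
      mem_iff_getElem.mpr ⟨q - (p + 2), by simp; omega, by simp [getElem_drop]; congr; omega⟩
    simp only [getD_eq_getElem _ _ hq, getD_eq_getElem _ _ hp,
      getD_eq_getElem _ _ (Nat.lt_of_succ_lt hp)] at hdesc ⊢
    exact h _ _ _ _ hsplit hdesc _ hmem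

/-- A permutation of `{1,…,n}` (written as a word) factors as a concatenation of
strictly increasing nonempty words, the last letter of each being greater than every
letter to its right, if and only if it avoids the dashed pattern `21-3`. -/
theorem factorization_iff_avoids21dash3 (n : ℕ) (w : List ℕ)
    (hw : w.Perm ((List.range n).map (· + 1))) :
    (∃ us : List (List ℕ), us.flatten = w ∧ (∀ u ∈ us, u ≠ []) ∧
      (∀ u ∈ us, u.Chain' (· < ·)) ∧
      (∀ j < us.length, ∀ l, (us.getD j []).getLast? = some l →
        ∀ x ∈ (us.drop (j + 1)).flatten, x < l)) ↔
    Avoids21dash3 w := by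
  have hnd : w.Nodup := hw.nodup_iff.mpr (nodup_range.map (add_left_injective 1))
  exact exists_isDominantRunFactorization_iff.trans
    ((nonAscentTopsDominate_iff_of_nodup hnd).trans avoids21dash3_iff.symm)
end

section
/- For all nonempty words u and v over an alphabet, the following identity holds in the free ℤ-module spanned by all words: u ≺′ v = Σ_{(v_1,v_2) : v = v_1 v_2} (−1)^{|v_1|} ((rev(v_1)·u) ⧢ v_2), where the sum is over all factorizations of v into two (possibly empty) factors, rev denotes word reversal, |·| denotes length, and · denotes concatenation. -/
/-- The shuffle product of two words, as a multiset of words. -/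
def sh {α : Type*} : List α → List α → Multiset (List α)
  | [], v => {v}
  | u, [] => {u}
  | a :: u, b :: v => ((sh u (b :: v)).map (a :: ·)) + ((sh (a :: u) v).map (b :: ·))
termination_by u v => u.length + v.length
decreasing_by all_goals (simp [List.length_cons]; try omega)

/-- A multiset of words, seen as an element of the free `ℤ`-module spanned by words. -/
noncomputable def ofM {α : Type*} (m : Multiset (List α)) : (List α) →₀ ℤ :=
  (m.map (fun w => Finsupp.single w (1 : ℤ))).sum

/-!
Induction on `v`, for all `a` and `u'` at once. The recursion of the shuffle product says that
`a(u' ⧢ bv) = (au') ⧢ (bv) - b((au') ⧢ v)`, and the second term is the induction hypothesis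
for the letter `b` and the word `au'`; shifting the index of its sum by one produces the sign
and puts `b` in front of the reversed prefix.
-/

lemma sh_nil_right {α : Type*} (u : List α) : sh u [] = {u} := by
  cases u <;> simp [sh]

lemma sh_cons_cons {α : Type*} (a b : α) (u v : List α) :
    sh (a :: u) (b :: v) = (sh u (b :: v)).map (a :: ·) + (sh (a :: u) v).map (b :: ·) := by
  rw [sh]

lemma ofM_add {α : Type*} (m n : Multiset (List α)) : ofM (m + n) = ofM m + ofM n := by
  simp [ofM]

lemma ofM_map_cons_sh_cons {α : Type*} (a b : α) (u v : List α) :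
    ofM ((sh u (b :: v)).map (a :: ·)) =
      ofM (sh (a :: u) (b :: v)) - ofM ((sh (a :: u) v).map (b :: ·)) := by
  rw [sh_cons_cons, ofM_add, add_sub_cancel_right]

theorem left_half_shuffle_identity_general {α : Type*} (a : α) (u' v : List α) :
    ofM ((sh u' v).map (a :: ·)) =
      ∑ k ∈ Finset.range (v.length + 1),
        ((-1 : ℤ) ^ k) • ofM (sh ((v.take k).reverse ++ a :: u') (v.drop k)) := by
  induction v generalizing a u' with
  | nil => simp [sh_nil_right, ofM]
  | cons b v ih =>
    rw [ofM_map_cons_sh_cons, ih b (a :: u'), List.length_cons, Finset.sum_range_succ' _ (v.length + 1)]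
    simp only [List.take_succ_cons, List.drop_succ_cons, List.take_zero, List.drop_zero,
      List.reverse_cons, List.reverse_nil, List.nil_append, List.append_assoc, List.cons_append,
      pow_zero, one_smul, pow_succ, mul_neg_one, neg_smul, Finset.sum_neg_distrib]
    abel

/-- For nonempty words `u = a·u'` and `v`, the left half-shuffle
`u ≺′ v = a(u' ⧢ v)` satisfies
`u ≺′ v = Σ_{v₁v₂ = v} (−1)^{|v₁|} ((rev(v₁)·u) ⧢ v₂)`. -/
theorem left_half_shuffle_identity {α : Type*} (a : α) (u' v : List α) (hv : v ≠ []) :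
    ofM ((sh u' v).map (a :: ·)) =
      ∑ k ∈ Finset.range (v.length + 1),
        ((-1 : ℤ) ^ k) • ofM (sh ((v.take k).reverse ++ a :: u') (v.drop k)) :=
  left_half_shuffle_identity_general a u' v
end

section
/- For all nonempty words u and v over an alphabet, the following identity holds in the free ℤ-module spanned by all words: u ≻′ v = Σ_{(u_1,u_2) : u = u_1 u_2} (−1)^{|u_1|} (u_2 ⧢ (rev(u_1)·v)), where the sum is over all factorizations of u into two (possibly empty) factors, rev denotes word reversal, |·| denotes length, and · denotes concatenation. -/
lemma reverse_take_succ_cons_append {α : Type*} (a : α) (u w : List α) (k : ℕ) :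
    ((a :: u).take (k + 1)).reverse ++ w = (u.take k).reverse ++ a :: w := by
  simp

theorem right_half_shuffle_identity_general {α : Type*} (u : List α)
    (b : α) (v' : List α) :
    ofM ((sh u v').map (b :: ·)) =
      ∑ k ∈ Finset.range (u.length + 1),
        ((-1 : ℤ) ^ k) • ofM (sh (u.drop k) ((u.take k).reverse ++ b :: v')) := by
  induction u generalizing b v' with
  | nil => simp [sh, ofM]
  | cons a u ih =>
    have shifted : ∑ k ∈ Finset.range (u.length + 1),
        ((-1 : ℤ) ^ (k + 1)) • ofM (sh ((a :: u).drop (k + 1))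
          (((a :: u).take (k + 1)).reverse ++ b :: v')) = -ofM ((sh u (b :: v')).map (a :: ·)) := by
      simp only [ih a (b :: v'), List.drop_succ_cons, reverse_take_succ_cons_append, pow_succ,
        mul_neg_one, neg_smul, Finset.sum_neg_distrib]
    rw [List.length_cons, Finset.sum_range_succ', shifted]
    simp only [List.drop_zero, List.take_zero, List.reverse_nil, List.nil_append, pow_zero,
      one_smul, sh_cons_cons, ofM_add]
    abel

/-- For nonempty words `u` and `v = b·v'`, the right half-shuffle
`u ≻′ v = b(u ⧢ v')` satisfies
`u ≻′ v = Σ_{u₁u₂ = u} (−1)^{|u₁|} (u₂ ⧢ (rev(u₁)·v))`. -/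
theorem right_half_shuffle_identity {α : Type*} (u : List α) (hu : u ≠ [])
    (b : α) (v' : List α) :
    ofM ((sh u v').map (b :: ·)) =
      ∑ k ∈ Finset.range (u.length + 1),
        ((-1 : ℤ) ^ k) • ofM (sh (u.drop k) ((u.take k).reverse ++ b :: v')) :=
  right_half_shuffle_identity_general u b v'
end

section
/- For all nonempty words u and v over an alphabet, the following identity holds in the free ℤ-module spanned by all words: u ≺ v = Σ_{(v_1,v_2) : v = v_1 v_2} (−1)^{|v_2|} ((u·rev(v_2)) ⧢ v_1), where the sum is over all factorizations of v into two (possibly empty) factors, rev denotes word reversal, |·| denotes length, and · denotes concatenation. -/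
namespace Shuffle

variable {α : Type*}

@[simp]
lemma sh_nil_left (v : List α) : sh [] v = {v} := by
  cases v <;> simp [sh]

@[simp]
lemma sh_nil_right (u : List α) : sh u [] = {u} := by
  cases u <;> simp [sh]

lemma sh_cons_cons (a b : α) (u v : List α) :
    sh (a :: u) (b :: v) = (sh u (b :: v)).map (a :: ·) + (sh (a :: u) v).map (b :: ·) := by
  rw [sh]

lemma sh_append_singleton (a b : α) : ∀ u v : List α,
    sh (u ++ [a]) (v ++ [b]) =
      (sh u (v ++ [b])).map (· ++ [a]) + (sh (u ++ [a]) v).map (· ++ [b])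
  | [], [] => by
      simp [sh_cons_cons, add_comm]
  | [], d :: v => by
      have ih := sh_append_singleton a b [] v
      simp only [List.nil_append, List.cons_append] at ih ⊢
      rw [sh_cons_cons, ih, sh_cons_cons]
      simp [Multiset.map_map]
      exact Multiset.cons_swap _ _ _
  | c :: u, [] => by
      have ih := sh_append_singleton a b u []
      simp only [List.nil_append, List.cons_append] at ih ⊢
      rw [sh_cons_cons, ih, sh_cons_cons]
      simp [Multiset.map_map]
      exact add_right_comm _ _ _
  | c :: u, d :: v => by
      have ih₁ := sh_append_singleton a b u (d :: v)
      have ih₂ := sh_append_singleton a b (c :: u) v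
      simp only [List.cons_append] at ih₁ ih₂ ⊢
      rw [sh_cons_cons, ih₁, ih₂, sh_cons_cons, sh_cons_cons]
      simp only [Multiset.map_add, Multiset.map_map, Function.comp_def, List.cons_append]
      abel
termination_by u v => u.length + v.length

lemma ofM_add (m n : Multiset (List α)) : ofM (m + n) = ofM m + ofM n := by
  simp [ofM]

lemma ofM_map_append_singleton (u' w : List α) (a b : α) :
    ofM ((sh u' (w ++ [b])).map (· ++ [a])) =
      ofM (sh (u' ++ [a]) (w ++ [b])) - ofM ((sh (u' ++ [a]) w).map (· ++ [b])) := by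
  rw [sh_append_singleton, ofM_add, add_sub_cancel_right]

noncomputable def alternatingShuffleSum (u v : List α) : List α →₀ ℤ :=
  ∑ k ∈ Finset.range (v.length + 1),
    ((-1 : ℤ) ^ (v.length - k)) • ofM (sh (u ++ (v.drop k).reverse) (v.take k))

@[simp]
lemma alternatingShuffleSum_nil (u : List α) : alternatingShuffleSum u [] = ofM {u} := by
  simp [alternatingShuffleSum]

lemma alternatingShuffleSum_append_singleton (u w : List α) (b : α) :
    alternatingShuffleSum u (w ++ [b]) =
      ofM (sh u (w ++ [b])) - alternatingShuffleSum (u ++ [b]) w := by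
  have term (k : ℕ) (hk : k ∈ Finset.range (w.length + 1)) :
      ((-1 : ℤ) ^ (w.length + 1 - k)) •
          ofM (sh (u ++ ((w ++ [b]).drop k).reverse) ((w ++ [b]).take k)) =
        -(((-1 : ℤ) ^ (w.length - k)) • ofM (sh (u ++ [b] ++ (w.drop k).reverse) (w.take k))) := by
    have hk : k ≤ w.length := Nat.lt_succ_iff.mp (Finset.mem_range.mp hk)
    rw [List.drop_append_of_le_length hk, List.take_append_of_le_length hk,
      Nat.sub_add_comm hk, pow_succ, mul_neg_one, neg_smul]
    simp
  rw [alternatingShuffleSum, List.length_append, List.length_singleton, Finset.sum_range_succ,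
    Finset.sum_congr rfl term, Finset.sum_neg_distrib, alternatingShuffleSum]
  simp [sub_eq_neg_add, List.take_of_length_le]

end Shuffle

open Shuffle in
theorem standard_left_half_shuffle_identity_general {α : Type*} (u' : List α) (a : α)
    (v : List α) :
    ofM ((sh u' v).map (fun w => w ++ [a])) =
      ∑ k ∈ Finset.range (v.length + 1),
        ((-1 : ℤ) ^ (v.length - k)) •
          ofM (sh ((u' ++ [a]) ++ (v.drop k).reverse) (v.take k)) := by
  change _ = alternatingShuffleSum (u' ++ [a]) v
  induction v using List.reverseRecOn generalizing u' a with
  | nil => simp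
  | append_singleton w b ih =>
    rw [ofM_map_append_singleton, alternatingShuffleSum_append_singleton, ← ih]

/-- For nonempty words `u = u'·a` and `v`, the standard left half-shuffle
`u ≺ v = (u' ⧢ v)a` satisfies
`u ≺ v = Σ_{v₁v₂ = v} (−1)^{|v₂|} ((u·rev(v₂)) ⧢ v₁)`. -/
theorem standard_left_half_shuffle_identity {α : Type*} (u' : List α) (a : α)
    (v : List α) (hv : v ≠ []) :
    ofM ((sh u' v).map (fun w => w ++ [a])) =
      ∑ k ∈ Finset.range (v.length + 1),
        ((-1 : ℤ) ^ (v.length - k)) •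
          ofM (sh ((u' ++ [a]) ++ (v.drop k).reverse) (v.take k)) :=
  standard_left_half_shuffle_identity_general u' a v
end

section
/- Let k,ℓ ≥ 1, let σ, σ′ ∈ S_k have the same descent set, and let τ, τ′ ∈ S_ℓ have the same descent set. For a k-element subset P of {1,…,k+ℓ}, let w(σ,τ,P) denote the word of length k+ℓ whose letters at the positions of P, read left to right, are σ(1),…,σ(k), and whose letters at the remaining positions, read left to right, are τ(1)+k,…,τ(ℓ)+k. Then for every k-element subset P of {1,…,k+ℓ}, the words w(σ,τ,P) and w(σ′,τ′,P) have the same descent set. -/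
def interleave (σ τ : List ℕ) (P : Finset ℕ) : List ℕ :=
  (List.range (σ.length + τ.length)).map (fun i =>
    if i ∈ P then σ.getD ((P.filter (· < i)).card) 0
    else τ.getD (((Finset.range (σ.length + τ.length) \ P).filter (· < i)).card) 0
      + σ.length)

open Finset

theorem Finset.card_filter_lt_succ_of_mem {S : Finset ℕ} {j : ℕ} (hj : j ∈ S) :
    #(S.filter (· < j + 1)) = #(S.filter (· < j)) + 1 := by
  have : S.filter (· < j + 1) = insert j (S.filter (· < j)) := by
    ext x
    simp only [mem_filter, mem_insert]
    constructor
    · rintro ⟨hx, hxj⟩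
      rcases Nat.lt_succ_iff_lt_or_eq.mp hxj with hlt | rfl
      exacts [Or.inr ⟨hx, hlt⟩, Or.inl rfl]
    · rintro (rfl | ⟨hx, hxj⟩)
      exacts [⟨hj, Nat.lt_add_one _⟩, ⟨hx, Nat.lt_succ_of_lt hxj⟩]
  rw [this, card_insert_of_notMem (by simp)]

theorem Finset.card_filter_lt_lt_card {S : Finset ℕ} {j : ℕ} (hj : j ∈ S) :
    #(S.filter (· < j)) < #S :=
  card_lt_card (filter_ssubset.mpr ⟨j, hj, lt_irrefl j⟩)

theorem List.getD_le_of_forall_le {w : List ℕ} {b : ℕ} (h : ∀ x ∈ w, x ≤ b) (j : ℕ) :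
    w.getD j 0 ≤ b := by
  by_cases hj : j < w.length
  · rw [getD_eq_getElem _ _ hj]; exact h _ (getElem_mem hj)
  · rw [getD_eq_default _ _ (not_lt.mp hj)]; exact b.zero_le

theorem List.getD_pos_of_forall_pos {w : List ℕ} (h : ∀ x ∈ w, 0 < x) {j : ℕ}
    (hj : j < w.length) : 0 < w.getD j 0 := by
  rw [getD_eq_getElem _ _ hj]; exact h _ (getElem_mem hj)

theorem forall_mem_pos_and_le_of_perm {w : List ℕ} {n : ℕ}
    (h : w.Perm ((List.range n).map (· + 1))) : ∀ x ∈ w, 0 < x ∧ x ≤ n := by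
  intro x hx
  obtain ⟨a, ha, rfl⟩ := List.mem_map.mp (h.mem_iff.mp hx)
  exact ⟨a.succ_pos, List.mem_range.mp ha⟩

theorem succ_mem_desSet {w : List ℕ} {j : ℕ} :
    j + 1 ∈ desSet w ↔ j + 1 < w.length ∧ w.getD (j + 1) 0 < w.getD j 0 := by
  simp [desSet]

/-- `#(S.filter (· < j))` is the index in `w` of the letter that `interleave` puts at the
position `j ∈ S`. -/
theorem getD_card_filter_lt_succ_lt_iff {w : List ℕ} {S : Finset ℕ} {j : ℕ} (hj : j ∈ S)
    (hj' : j + 1 ∈ S) (hS : #S = w.length) :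
    w.getD #(S.filter (· < j + 1)) 0 < w.getD #(S.filter (· < j)) 0 ↔
      #(S.filter (· < j)) + 1 ∈ desSet w := by
  have hlt := card_filter_lt_lt_card hj'
  rw [card_filter_lt_succ_of_mem hj, hS] at hlt
  rw [card_filter_lt_succ_of_mem hj, succ_mem_desSet, and_iff_right hlt]

theorem length_interleave (σ τ : List ℕ) (P : Finset ℕ) :
    (interleave σ τ P).length = σ.length + τ.length := by
  simp [interleave]

theorem getD_interleave {σ τ : List ℕ} {P : Finset ℕ} {i : ℕ}
    (hi : i < σ.length + τ.length) :
    (interleave σ τ P).getD i 0 =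
      if i ∈ P then σ.getD #(P.filter (· < i)) 0
      else τ.getD #((range (σ.length + τ.length) \ P).filter (· < i)) 0 + σ.length := by
  simp [interleave, List.getD_eq_getElem?_getD, hi]

theorem succ_mem_desSet_interleave_iff {σ τ : List ℕ} {P : Finset ℕ} {k l m : ℕ}
    (hσk : σ.length = k) (hτl : τ.length = l) (hσ : ∀ x ∈ σ, x ≤ k) (hτ : ∀ x ∈ τ, 0 < x)
    (hP : P ⊆ range (k + l)) (hPcard : #P = k) :
    m + 1 ∈ desSet (interleave σ τ P) ↔ m + 1 < k + l ∧
      (m ∈ P ∧ m + 1 ∈ P ∧ #(P.filter (· < m)) + 1 ∈ desSet σ ∨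
        m ∉ P ∧ m + 1 ∈ P ∨
        m ∉ P ∧ m + 1 ∉ P ∧ #((range (k + l) \ P).filter (· < m)) + 1 ∈ desSet τ) := by
  subst hσk hτl
  rw [succ_mem_desSet, length_interleave]
  refine and_congr_right fun hm => ?_
  rw [getD_interleave hm, getD_interleave (Nat.lt_of_succ_lt hm)]
  set Q := range (σ.length + τ.length) \ P
  have hQcard : #Q = τ.length := by
    rw [card_sdiff_of_subset hP, card_range, hPcard, Nat.add_sub_cancel_left]
  have hmQ (h : m ∉ P) : m ∈ Q := mem_sdiff.mpr ⟨mem_range.mpr (Nat.lt_of_succ_lt hm), h⟩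
  by_cases h0 : m ∈ P <;> by_cases h1 : m + 1 ∈ P <;> simp only [h0, h1, if_true, if_false,
    true_and, false_and, not_true, not_false_eq_true, and_false, or_false, false_or]
  · exact getD_card_filter_lt_succ_lt_iff h0 h1 hPcard
  · have := σ.getD_le_of_forall_le hσ #(P.filter (· < m))
    exact iff_false_intro (by omega)
  · have := σ.getD_le_of_forall_le hσ #(P.filter (· < m + 1))
    have := τ.getD_pos_of_forall_pos hτ (hQcard ▸ card_filter_lt_lt_card (hmQ h0))
    exact iff_true_intro (by omega)
  · rw [Nat.add_lt_add_iff_right]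
    exact getD_card_filter_lt_succ_lt_iff (hmQ h0)
      (mem_sdiff.mpr ⟨mem_range.mpr hm, h1⟩) hQcard

theorem interleave_desSet_depends_only_on_descents_general
    (k l : ℕ) (σ σ' τ τ' : List ℕ)
    (hσ : σ.Perm ((List.range k).map (· + 1)))
    (hσ' : σ'.Perm ((List.range k).map (· + 1)))
    (hτ : τ.Perm ((List.range l).map (· + 1)))
    (hτ' : τ'.Perm ((List.range l).map (· + 1)))
    (hdσ : desSet σ = desSet σ') (hdτ : desSet τ = desSet τ')
    (P : Finset ℕ) (hP : P ⊆ Finset.range (k + l)) (hPcard : P.card = k) :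
    desSet (interleave σ τ P) = desSet (interleave σ' τ' P) := by
  have desSet_succ_iff {ρ ρ' : List ℕ} (hρ : ρ.Perm ((List.range k).map (· + 1)))
      (hρ' : ρ'.Perm ((List.range l).map (· + 1))) (m : ℕ) :=
    succ_mem_desSet_interleave_iff (m := m) (by simpa using hρ.length_eq)
      (by simpa using hρ'.length_eq) (fun x hx => (forall_mem_pos_and_le_of_perm hρ x hx).2)
      (fun x hx => (forall_mem_pos_and_le_of_perm hρ' x hx).1) hP hPcard
  ext i
  rcases i with _ | m
  · simp [desSet]
  · rw [desSet_succ_iff hσ hτ, desSet_succ_iff hσ' hτ', hdσ, hdτ]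

/-- If `σ, σ'` are permutations of `{1,…,k}` with the same descent set and `τ, τ'` are
permutations of `{1,…,ℓ}` with the same descent set, then for every `k`-element set `P`
of positions, the shuffled words `w(σ,τ,P)` and `w(σ',τ',P)` have the same descent set. -/
theorem interleave_desSet_depends_only_on_descents
    (k l : ℕ) (hk : 1 ≤ k) (hl : 1 ≤ l) (σ σ' τ τ' : List ℕ)
    (hσ : σ.Perm ((List.range k).map (· + 1)))
    (hσ' : σ'.Perm ((List.range k).map (· + 1)))
    (hτ : τ.Perm ((List.range l).map (· + 1)))
    (hτ' : τ'.Perm ((List.range l).map (· + 1)))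
    (hdσ : desSet σ = desSet σ') (hdτ : desSet τ = desSet τ')
    (P : Finset ℕ) (hP : P ⊆ Finset.range (k + l)) (hPcard : P.card = k) :
    desSet (interleave σ τ P) = desSet (interleave σ' τ' P) :=
  interleave_desSet_depends_only_on_descents_general k l σ σ' τ τ' hσ hσ' hτ hτ' hdσ hdτ P hP hPcard
end

section
/- Let w and w′ be words with pairwise distinct letters from a totally ordered alphabet such that w′ is obtained from w by a single Bell rewriting, i.e., w = x·b·u·c·a·y and w′ = x·b·u·a·c·y where a,b,c are letters with a<b<c, u is a (possibly empty) word all of whose letters are smaller than b, and x,y are arbitrary words. Then PSA(w) = PSA(w′). -/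
/-- One step of the patience sorting algorithm: insert the letter `x` into the block of
`S` whose maximum is largest among those maxima smaller than `x`; if no block has
maximum smaller than `x`, create the new block `{x}`. -/
def PSAinsert (x : ℕ) (S : Finset (Finset ℕ)) : Finset (Finset ℕ) :=
  let cands := S.filter (fun B => B.max < (x : WithBot ℕ))
  if cands.Nonempty then
    let best := (cands.filter (fun B => ∀ C ∈ cands, C.max ≤ B.max)).sup id
    insert (insert x best) (S.erase best)
  else insert {x} S

/-- The patience sorting algorithm applied to a word with distinct letters: the set
partition of its letters obtained by inserting them from left to right. -/
def PSA (w : List ℕ) : Finset (Finset ℕ) :=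
  w.foldl (fun S x => PSAinsert x S) ∅

/-!
After reading `x·b·u` some block has maximum `b`: the letters of `u` are smaller than `b`,
and a letter only ever joins a block with a smaller maximum. Afterwards `c` joins a block
whose maximum is at least `b`, while `a` joins a block whose maximum is below `a` (or starts
a new one). So the two insertions modify different blocks, neither changes the candidates
relevant to the other, and they commute.
-/

def PSAcands (x : ℕ) (S : Finset (Finset ℕ)) : Finset (Finset ℕ) :=
  S.filter (fun B => B.max < (x : WithBot ℕ))

-- Without a disjointness invariant this union of the blocks of largest maximum need not be a
-- block of `C`; the argument only ever uses its maximum.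
def PSAbest (C : Finset (Finset ℕ)) : Finset ℕ :=
  (C.filter (fun B => ∀ B' ∈ C, B'.max ≤ B.max)).sup id

lemma PSAinsert_of_nonempty {x : ℕ} {S : Finset (Finset ℕ)} (h : (PSAcands x S).Nonempty) :
    PSAinsert x S =
      insert (insert x (PSAbest (PSAcands x S))) (S.erase (PSAbest (PSAcands x S))) :=
  if_pos h

lemma PSAinsert_of_not_nonempty {x : ℕ} {S : Finset (Finset ℕ)}
    (h : ¬ (PSAcands x S).Nonempty) : PSAinsert x S = insert {x} S :=
  if_neg h

lemma PSAbest_max_lt {C : Finset (Finset ℕ)} {x : ℕ} (h : ∀ B ∈ C, B.max < x) :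
    (PSAbest C).max < x := by
  refine (Finset.sup_lt_iff (WithBot.bot_lt_coe x)).2 fun y hy => ?_
  obtain ⟨B, hB, hyB⟩ := Finset.mem_sup.1 hy
  exact (Finset.le_max hyB).trans_lt (h B (Finset.mem_filter.1 hB).1)

lemma max_le_PSAbest_max {C : Finset (Finset ℕ)} {D : Finset ℕ} (hD : D ∈ C) :
    D.max ≤ (PSAbest C).max := by
  obtain ⟨B, hB, hBmax⟩ := Finset.exists_max_image C Finset.max ⟨D, hD⟩
  have hB' : B ⊆ PSAbest C :=
    Finset.le_sup (f := id) (Finset.mem_filter.2 ⟨hB, hBmax⟩)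
  exact (hBmax D hD).trans (Finset.max_mono hB')

lemma PSAbest_congr {C C' : Finset (Finset ℕ)} {m : WithBot ℕ} (hm : ∃ B ∈ C, m ≤ B.max)
    (h : ∀ B, m ≤ B.max → (B ∈ C ↔ B ∈ C')) : PSAbest C = PSAbest C' := by
  -- an argmax of either family has maximum at least `m`, where the two families agree
  have key : ∀ {C C' : Finset (Finset ℕ)}, (∃ B ∈ C, m ≤ B.max) →
      (∀ B, m ≤ B.max → (B ∈ C ↔ B ∈ C')) → ∀ X, X ∈ C → (∀ Y ∈ C, Y.max ≤ X.max) →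
      X ∈ C' ∧ ∀ Y ∈ C', Y.max ≤ X.max := by
    rintro C C' ⟨B, hB, hmB⟩ h X hX hXmax
    have hmX : m ≤ X.max := hmB.trans (hXmax B hB)
    refine ⟨(h X hmX).1 hX, fun Y hY => ?_⟩
    rcases le_or_gt m Y.max with hmY | hYm
    · exact hXmax Y ((h Y hmY).2 hY)
    · exact hYm.le.trans hmX
  have hm' : ∃ B ∈ C', m ≤ B.max := by
    obtain ⟨B, hB, hmB⟩ := hm
    exact ⟨B, (h B hmB).1 hB, hmB⟩
  unfold PSAbest
  congr 1
  ext X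
  simp only [Finset.mem_filter]
  exact ⟨fun hX => key hm h X hX.1 hX.2,
    fun hX => key hm' (fun B hB => (h B hB).symm) X hX.1 hX.2⟩

lemma PSAbest_PSAcands_max_lt (x : ℕ) (S : Finset (Finset ℕ)) :
    (PSAbest (PSAcands x S)).max < x :=
  PSAbest_max_lt fun _ hB => (Finset.mem_filter.1 hB).2

lemma max_insert_PSAbest (x : ℕ) (S : Finset (Finset ℕ)) :
    (insert x (PSAbest (PSAcands x S))).max = x := by
  rw [Finset.max_insert]
  exact max_eq_left (PSAbest_PSAcands_max_lt x S).le

lemma mem_PSAinsert_iff_of_lt_max {x : ℕ} {S : Finset (Finset ℕ)} {B : Finset ℕ}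
    (hB : x < B.max) : B ∈ PSAinsert x S ↔ B ∈ S := by
  by_cases h : (PSAcands x S).Nonempty
  · have hnew : B ≠ insert x (PSAbest (PSAcands x S)) := by
      rintro rfl
      exact hB.ne' (max_insert_PSAbest x S)
    have hold : B ≠ PSAbest (PSAcands x S) := by
      rintro rfl
      exact (hB.trans (PSAbest_PSAcands_max_lt x S)).false
    rw [PSAinsert_of_nonempty h, Finset.mem_insert, Finset.mem_erase]
    tauto
  · have hnew : B ≠ {x} := by
      rintro rfl
      exact hB.ne' Finset.max_singleton
    rw [PSAinsert_of_not_nonempty h, Finset.mem_insert]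
    tauto

lemma mem_PSAinsert_iff_of_max_lt_PSAbest {x : ℕ} {S : Finset (Finset ℕ)} {B : Finset ℕ}
    (hB : B.max < (PSAbest (PSAcands x S)).max) : B ∈ PSAinsert x S ↔ B ∈ S := by
  have h : (PSAcands x S).Nonempty := by
    by_contra h
    rw [Finset.not_nonempty_iff_eq_empty.1 h] at hB
    exact not_lt_bot hB
  have hnew : B ≠ insert x (PSAbest (PSAcands x S)) := by
    rintro rfl
    rw [max_insert_PSAbest] at hB
    exact (hB.trans (PSAbest_PSAcands_max_lt x S)).false
  have hold : B ≠ PSAbest (PSAcands x S) := fun h => hB.ne (congrArg Finset.max h)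
  rw [PSAinsert_of_nonempty h, Finset.mem_insert, Finset.mem_erase]
  tauto

lemma exists_mem_PSAinsert_max_eq (x : ℕ) (S : Finset (Finset ℕ)) :
    ∃ D ∈ PSAinsert x S, D.max = x := by
  by_cases h : (PSAcands x S).Nonempty
  · rw [PSAinsert_of_nonempty h]
    exact ⟨_, Finset.mem_insert_self _ _, max_insert_PSAbest x S⟩
  · rw [PSAinsert_of_not_nonempty h]
    exact ⟨{x}, Finset.mem_insert_self _ _, Finset.max_singleton⟩

lemma mem_foldl_PSAinsert {S : Finset (Finset ℕ)} {B : Finset ℕ} (hB : B ∈ S) {u : List ℕ}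
    (hu : ∀ z ∈ u, z < B.max) : B ∈ u.foldl (fun S z => PSAinsert z S) S := by
  induction u generalizing S with
  | nil => exact hB
  | cons z u ih =>
    exact ih ((mem_PSAinsert_iff_of_lt_max (hu z (by simp))).2 hB)
      fun z' hz' => hu z' (by simp [hz'])

lemma PSAinsert_comm {S : Finset (Finset ℕ)} {D : Finset ℕ} (hD : D ∈ S) {a c : ℕ}
    (haD : a < D.max) (hDc : D.max < c) :
    PSAinsert c (PSAinsert a S) = PSAinsert a (PSAinsert c S) := by
  set Bc := PSAbest (PSAcands c S)
  have hDcands : D ∈ PSAcands c S := Finset.mem_filter.2 ⟨hD, hDc⟩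
  have hcS : (PSAcands c S).Nonempty := ⟨D, hDcands⟩
  have haBc : (a : WithBot ℕ) < Bc.max := haD.trans_le (max_le_PSAbest_max hDcands)
  have hc_after_a : PSAinsert c (PSAinsert a S) =
      insert (insert c Bc) ((PSAinsert a S).erase Bc) := by
    have hne : (PSAcands c (PSAinsert a S)).Nonempty :=
      ⟨D, Finset.mem_filter.2 ⟨(mem_PSAinsert_iff_of_lt_max haD).2 hD, hDc⟩⟩
    have hbest : PSAbest (PSAcands c (PSAinsert a S)) = Bc := by
      refine (PSAbest_congr ⟨D, hDcands, le_rfl⟩ fun B hB => ?_).symm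
      simp only [PSAcands, Finset.mem_filter, mem_PSAinsert_iff_of_lt_max (haD.trans_le hB)]
    rw [PSAinsert_of_nonempty hne, hbest]
  have hcands_a : PSAcands a (PSAinsert c S) = PSAcands a S := by
    ext B
    simp only [PSAcands, Finset.mem_filter]
    exact and_congr_left fun hB => mem_PSAinsert_iff_of_max_lt_PSAbest (hB.trans haBc)
  have hcBc_max : (insert c Bc).max = c := max_insert_PSAbest c S
  rw [hc_after_a]
  by_cases haS : (PSAcands a S).Nonempty
  · have haBa_ne : insert a (PSAbest (PSAcands a S)) ≠ Bc := fun h =>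
      haBc.ne (by rw [← h, max_insert_PSAbest])
    have hcBc_ne : insert c Bc ≠ PSAbest (PSAcands a S) := fun h => by
      have := PSAbest_PSAcands_max_lt a S
      rw [← h, hcBc_max] at this
      exact (this.trans (haD.trans hDc)).false
    rw [PSAinsert_of_nonempty haS, PSAinsert_of_nonempty (hcands_a ▸ haS), hcands_a,
      PSAinsert_of_nonempty hcS, Finset.erase_insert_of_ne haBa_ne,
      Finset.erase_insert_of_ne hcBc_ne, Finset.insert_comm, Finset.erase_right_comm]
  · have ha_ne : ({a} : Finset ℕ) ≠ Bc := fun h =>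
      haBc.ne (by rw [← h]; exact Finset.max_singleton.symm)
    rw [PSAinsert_of_not_nonempty haS, PSAinsert_of_not_nonempty (hcands_a ▸ haS),
      PSAinsert_of_nonempty hcS, Finset.erase_insert_of_ne ha_ne, Finset.insert_comm]

theorem PSA_invariant_under_Bell_rewriting_general
    (x y u : List ℕ) (a b c : ℕ) (hab : a < b) (hbc : b < c)
    (hu : ∀ z ∈ u, z < b) :
    PSA (x ++ b :: u ++ c :: a :: y) = PSA (x ++ b :: u ++ a :: c :: y) := by
  obtain ⟨D, hD, hDb⟩ := exists_mem_PSAinsert_max_eq b (PSA x)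
  have hDu : D ∈ u.foldl (fun S z => PSAinsert z S) (PSAinsert b (PSA x)) :=
    mem_foldl_PSAinsert hD fun z hz => hDb ▸ WithBot.coe_lt_coe.2 (hu z hz)
  simp only [PSA, List.foldl_append, List.foldl_cons] at hDu ⊢
  rw [PSAinsert_comm (a := a) (c := c) hDu (by rw [hDb]; exact_mod_cast hab)
    (by rw [hDb]; exact_mod_cast hbc)]

/-- A single Bell rewriting `x·b·u·c·a·y ≡ x·b·u·a·c·y` (with `a < b < c` and all
letters of `u` smaller than `b`) does not change the result of the patience sorting
algorithm. -/
theorem PSA_invariant_under_Bell_rewriting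
    (x y u : List ℕ) (a b c : ℕ) (hab : a < b) (hbc : b < c)
    (hu : ∀ z ∈ u, z < b)
    (hdist : (x ++ b :: u ++ c :: a :: y).Nodup) :
    PSA (x ++ b :: u ++ c :: a :: y) = PSA (x ++ b :: u ++ a :: c :: y) :=
  PSA_invariant_under_Bell_rewriting_general x y u a b c hab hbc hu
end

section
/- Two permutations σ, τ ∈ S_n (identified with words σ(1)⋯σ(n) and τ(1)⋯τ(n)) are Bell congruent if and only if PSA(σ) = PSA(τ). -/
/-- One Bell rewriting: `x·b·u·c·a·y ↦ x·b·u·a·c·y` where `a < b < c` and all letters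
of `u` are smaller than `b`. -/
def BellStep (w w' : List ℕ) : Prop :=
  ∃ (x y u : List ℕ) (a b c : ℕ), a < b ∧ b < c ∧ (∀ z ∈ u, z < b) ∧
    w = x ++ b :: u ++ c :: a :: y ∧ w' = x ++ b :: u ++ a :: c :: y

/-- The Bell congruence: the equivalence relation generated by Bell rewritings. -/
def BellCongr : List ℕ → List ℕ → Prop := Relation.EqvGen BellStep

/-!
Patience sorting is computed by the list `piles w` of its blocks, each stored as a decreasing
list, the blocks ordered by decreasing maxima. In a Bell rewriting `x·b·u·c·a·y ↦ x·b·u·a·c·y`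
the letter `b` is still the top of a pile after reading `x·b·u`, and it separates the piles
that `a` and `c` go to, so the two insertions commute. Conversely, every word is Bell
congruent to the reading word of its piles: putting a letter `z` on a pile with top `b < z`
amounts to moving `z` leftwards past the later piles, whose letters are all below `b`, one
Bell rewriting at a time. Finally the piles are recovered from the set partition, so words
with the same PSA have the same reading word.
-/

namespace PatienceSorting

/-- Piles are stored as decreasing lists, so the head of a pile is its maximum. -/
def pileTop (B : List ℕ) : ℕ := B.headD 0

/-- Since the tops of the piles decrease, the first pile whose top is below `z` is the one
whose top is the largest below `z`, as in `PSAinsert`. -/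
def pileInsert (z : ℕ) : List (List ℕ) → List (List ℕ)
  | [] => [[z]]
  | B :: L => if pileTop B < z then (z :: B) :: L else B :: pileInsert z L

def piles (w : List ℕ) : List (List ℕ) := w.foldl (fun L z => pileInsert z L) []

def IsPiles (L : List (List ℕ)) : Prop :=
  (∀ B ∈ L, B ≠ [] ∧ B.Pairwise (· > ·)) ∧ (L.map pileTop).Pairwise (· > ·)

@[simp] lemma pileTop_cons (b : ℕ) (B : List ℕ) : pileTop (b :: B) = b := rfl

lemma pileTop_mem {B : List ℕ} (hB : B ≠ []) : pileTop B ∈ B := by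
  cases B with
  | nil => exact absurd rfl hB
  | cons b t => simp

lemma le_pileTop {B : List ℕ} (hB : B.Pairwise (· > ·)) {m : ℕ} (hm : m ∈ B) :
    m ≤ pileTop B := by
  cases B with
  | nil => simp at hm
  | cons b t =>
    rcases List.mem_cons.1 hm with rfl | hm
    · simp
    · exact (List.pairwise_cons.1 hB).1 m hm |>.le

section pileInsert

variable {z : ℕ} {B : List ℕ} {L P Q : List (List ℕ)}

lemma pileInsert_cons_of_lt (h : pileTop B < z) : pileInsert z (B :: L) = (z :: B) :: L := by
  simp [pileInsert, h]

lemma pileInsert_cons_of_not_lt (h : ¬ pileTop B < z) :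
    pileInsert z (B :: L) = B :: pileInsert z L := by
  simp [pileInsert, h]

lemma pileInsert_of_forall_not_lt (h : ∀ B ∈ L, ¬ pileTop B < z) :
    pileInsert z L = L ++ [[z]] := by
  induction L with
  | nil => rfl
  | cons B L ih =>
    rw [List.forall_mem_cons] at h
    rw [pileInsert_cons_of_not_lt h.1, ih h.2, List.cons_append]

lemma pileInsert_append_cons (hP : ∀ C ∈ P, ¬ pileTop C < z) (hB : pileTop B < z) :
    pileInsert z (P ++ B :: Q) = P ++ (z :: B) :: Q := by
  induction P with
  | nil => exact pileInsert_cons_of_lt hB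
  | cons C P ih =>
    rw [List.forall_mem_cons] at hP
    rw [List.cons_append, pileInsert_cons_of_not_lt hP.1, ih hP.2, List.cons_append]

lemma forall_not_lt_or_exists_append_cons (z : ℕ) (L : List (List ℕ)) :
    (∀ B ∈ L, ¬ pileTop B < z) ∨
      ∃ P B Q, L = P ++ B :: Q ∧ (∀ C ∈ P, ¬ pileTop C < z) ∧ pileTop B < z := by
  induction L with
  | nil => simp
  | cons B L ih =>
    by_cases hB : pileTop B < z
    · exact .inr ⟨[], B, L, rfl, by simp, hB⟩
    · rcases ih with h | ⟨P, C, Q, rfl, hP, hC⟩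
      · exact .inl (List.forall_mem_cons.2 ⟨hB, h⟩)
      · exact .inr ⟨B :: P, C, Q, rfl, List.forall_mem_cons.2 ⟨hB, hP⟩, hC⟩

lemma mem_flatten_pileInsert {m : ℕ} :
    m ∈ (pileInsert z L).flatten ↔ m = z ∨ m ∈ L.flatten := by
  rcases forall_not_lt_or_exists_append_cons z L with h | ⟨P, B, Q, rfl, hP, hB⟩
  · rw [pileInsert_of_forall_not_lt h]
    simp [or_comm]
  · rw [pileInsert_append_cons hP hB]
    simp only [List.flatten_append, List.flatten_cons, List.mem_append, List.mem_cons]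
    tauto

lemma IsPiles.pileInsert (hL : IsPiles L) (hz : z ∉ L.flatten) : IsPiles (pileInsert z L) := by
  have htop_ne : ∀ C ∈ L, pileTop C ≠ z := fun C hC h =>
    hz (List.mem_flatten.2 ⟨C, hC, h ▸ pileTop_mem (hL.1 C hC).1⟩)
  rcases forall_not_lt_or_exists_append_cons z L with h | ⟨P, B, Q, rfl, hP, hB⟩
  · rw [pileInsert_of_forall_not_lt h]
    refine ⟨List.forall_mem_append.2 ⟨hL.1, by simp⟩, ?_⟩
    simp only [List.map_append, List.map_cons, List.map_nil, List.pairwise_append, hL.2,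
      List.pairwise_singleton, List.mem_singleton, forall_eq, List.mem_map, true_and]
    rintro _ ⟨C, hC, rfl⟩
    exact lt_of_le_of_ne (not_lt.1 (h C hC)) (htop_ne C hC).symm
  · rw [pileInsert_append_cons hP hB]
    obtain ⟨hpiles, htops⟩ := hL
    have hBpile := hpiles B (by simp)
    have hzB : ∀ m ∈ B, z > m := fun m hm => (le_pileTop hBpile.2 hm).trans_lt hB
    have hPz : ∀ C ∈ P, pileTop C > z := fun C hC =>
      lt_of_le_of_ne (not_lt.1 (hP C hC)) (htop_ne C (by simp [hC])).symm
    refine ⟨?_, ?_⟩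
    · simp only [List.mem_append, List.mem_cons] at hpiles ⊢
      rintro C (hC | rfl | hC)
      · exact hpiles C (.inl hC)
      · exact ⟨List.cons_ne_nil _ _, List.pairwise_cons.2 ⟨hzB, hBpile.2⟩⟩
      · exact hpiles C (.inr (.inr hC))
    · simp only [List.map_append, List.map_cons, List.pairwise_append, List.pairwise_cons,
        List.mem_cons, List.mem_map] at htops ⊢
      obtain ⟨hPP, ⟨hBQ, hQQ⟩, hPBQ⟩ := htops
      refine ⟨hPP, ⟨fun _ ha => (hBQ _ ha).trans hB, hQQ⟩, ?_⟩
      rintro _ ⟨C, hC, rfl⟩ _ (rfl | hb)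
      · exact hPz C hC
      · exact hPBQ _ ⟨C, hC, rfl⟩ _ (.inr hb)

lemma mem_map_pileTop_pileInsert_self (z : ℕ) (L : List (List ℕ)) :
    z ∈ (pileInsert z L).map pileTop := by
  rcases forall_not_lt_or_exists_append_cons z L with h | ⟨P, B, Q, rfl, hP, hB⟩
  · rw [pileInsert_of_forall_not_lt h]
    simp
  · rw [pileInsert_append_cons hP hB]
    simp

lemma mem_map_pileTop_pileInsert {b : ℕ} (hb : b ∈ L.map pileTop) (hzb : z < b) :
    b ∈ (pileInsert z L).map pileTop := by
  rcases forall_not_lt_or_exists_append_cons z L with h | ⟨P, B, Q, rfl, hP, hB⟩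
  · rw [pileInsert_of_forall_not_lt h]
    exact List.map_append ▸ List.mem_append_left _ hb
  · rw [pileInsert_append_cons hP hB]
    have hbB : b ≠ pileTop B := by omega
    simp only [List.map_append, List.map_cons, List.mem_append, List.mem_cons, hbB,
      false_or] at hb ⊢
    exact hb.imp_right .inr

lemma pileInsert_comm {a b c : ℕ} (hab : a < b) (hbc : b < c)
    (htops : (L.map pileTop).Pairwise (· ≥ ·)) (hb : b ∈ L.map pileTop) :
    pileInsert a (pileInsert c L) = pileInsert c (pileInsert a L) := by
  induction L with
  | nil => simp at hb
  | cons B L ih =>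
    rw [List.map_cons, List.pairwise_cons] at htops
    rw [List.map_cons, List.mem_cons] at hb
    have hbB : b ≤ pileTop B := hb.elim (·.le) (htops.1 b)
    have haB : ¬ pileTop B < a := by omega
    by_cases hcB : pileTop B < c
    · have hac : ¬ pileTop (c :: B) < a := by rw [pileTop_cons]; omega
      rw [pileInsert_cons_of_lt hcB, pileInsert_cons_of_not_lt hac, pileInsert_cons_of_not_lt haB,
        pileInsert_cons_of_lt hcB]
    · rw [pileInsert_cons_of_not_lt hcB, pileInsert_cons_of_not_lt haB,
        pileInsert_cons_of_not_lt haB, pileInsert_cons_of_not_lt hcB,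
        ih htops.2 (hb.resolve_left (by omega))]

end pileInsert

lemma piles_append (v w : List ℕ) :
    piles (v ++ w) = w.foldl (fun L z => pileInsert z L) (piles v) :=
  List.foldl_append

lemma piles_concat (v : List ℕ) (z : ℕ) : piles (v ++ [z]) = pileInsert z (piles v) := by
  simp [piles_append]

lemma mem_flatten_piles {w : List ℕ} {m : ℕ} : m ∈ (piles w).flatten ↔ m ∈ w := by
  induction w using List.reverseRecOn with
  | nil => simp [piles]
  | append_singleton v z ih =>
    rw [piles_concat, mem_flatten_pileInsert, ih, List.mem_append, List.mem_singleton, or_comm]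

lemma isPiles_piles {w : List ℕ} (hw : w.Nodup) : IsPiles (piles w) := by
  induction w using List.reverseRecOn with
  | nil => simp [IsPiles, piles]
  | append_singleton v z ih =>
    rw [List.nodup_append] at hw
    rw [piles_concat]
    exact (ih hw.1).pileInsert fun h => hw.2.2 z (mem_flatten_piles.1 h) z (by simp) rfl

lemma mem_map_pileTop_piles_append_cons {b : ℕ} (v : List ℕ) {u : List ℕ}
    (hu : ∀ z ∈ u, z < b) : b ∈ (piles (v ++ b :: u)).map pileTop := by
  induction u using List.reverseRecOn with
  | nil =>
    rw [← List.singleton_append, ← List.append_assoc, List.append_nil, piles_concat]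
    exact mem_map_pileTop_pileInsert_self b _
  | append_singleton u z ih =>
    rw [← List.cons_append, ← List.append_assoc, piles_concat]
    exact mem_map_pileTop_pileInsert (ih fun m hm => hu m (by simp [hm])) (hu z (by simp))

lemma piles_eq_of_bellStep {w w' : List ℕ} (h : BellStep w w') (hw : w.Nodup) :
    piles w = piles w' := by
  obtain ⟨x, y, u, a, b, c, hab, hbc, hu, rfl, rfl⟩ := h
  have hxbu : (x ++ b :: u).Nodup := hw.sublist (List.sublist_append_left _ _)
  simp only [piles_append (x ++ b :: u), List.foldl_cons]
  rw [pileInsert_comm hab hbc ((isPiles_piles hxbu).2.imp le_of_lt)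
    (mem_map_pileTop_piles_append_cons x hu)]

lemma BellStep.perm {w w' : List ℕ} (h : BellStep w w') : w.Perm w' := by
  obtain ⟨x, y, u, a, b, c, -, -, -, rfl, rfl⟩ := h
  exact .append_left _ (.swap a c y)

lemma BellCongr.perm {w w' : List ℕ} (h : BellCongr w w') : w.Perm w' :=
  (List.Perm.eqv _).eqvGen_iff.1 (Relation.EqvGen.mono (fun _ _ => BellStep.perm) _ _ h)

lemma piles_eq_of_bellCongr {v w : List ℕ} (h : BellCongr v w) (hv : v.Nodup) :
    piles v = piles w := by
  induction h with
  | rel _ _ h => exact piles_eq_of_bellStep h hv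
  | refl => rfl
  | symm _ _ h ih => exact (ih ((BellCongr.perm h).nodup_iff.2 hv)).symm
  | trans _ _ _ h _ ih₁ ih₂ => exact (ih₁ hv).trans (ih₂ ((BellCongr.perm h).nodup_iff.1 hv))

lemma PSAinsert_of_forall_not_lt {x : ℕ} {S : Finset (Finset ℕ)} (h : ∀ B ∈ S, ¬ B.max < x) :
    PSAinsert x S = insert {x} S := by
  have : S.filter (fun B => B.max < (x : WithBot ℕ)) = ∅ := Finset.filter_eq_empty_iff.2 h
  simp [PSAinsert, this]

lemma PSAinsert_of_max_lt {x : ℕ} {S : Finset (Finset ℕ)} {B : Finset ℕ} (hB : B ∈ S)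
    (hBx : B.max < x) (hmax : ∀ C ∈ S, C.max < x → C ≠ B → C.max < B.max) :
    PSAinsert x S = insert (insert x B) (S.erase B) := by
  have hBc : B ∈ S.filter (fun B => B.max < (x : WithBot ℕ)) := Finset.mem_filter.2 ⟨hB, hBx⟩
  have hbest : (S.filter (fun B => B.max < (x : WithBot ℕ))).filter
      (fun C => ∀ D ∈ S.filter (fun B => B.max < (x : WithBot ℕ)), D.max ≤ C.max) = {B} := by
    ext C
    simp only [Finset.mem_filter, Finset.mem_singleton]
    refine ⟨fun ⟨⟨hC, hCx⟩, hCmax⟩ => by_contra fun hCB => ?_, ?_⟩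
    · exact (hmax C hC hCx hCB).not_ge (hCmax B ⟨hB, hBx⟩)
    · intro hCB
      rw [hCB]
      refine ⟨⟨hB, hBx⟩, fun D ⟨hD, hDx⟩ => ?_⟩
      by_cases hDB : D = B
      · exact hDB ▸ le_rfl
      · exact (hmax D hD hDx hDB).le
  rw [PSAinsert]
  dsimp only
  rw [if_pos ⟨B, hBc⟩, hbest, Finset.sup_singleton, id]

lemma max_toFinset {B : List ℕ} (hne : B ≠ []) (hB : B.Pairwise (· > ·)) :
    B.toFinset.max = pileTop B :=
  le_antisymm
    (Finset.max_le fun _ hm => WithBot.coe_le_coe.2 (le_pileTop hB (List.mem_toFinset.1 hm)))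
    (Finset.le_max (List.mem_toFinset.2 (pileTop_mem hne)))

namespace IsPiles

variable {L : List (List ℕ)}

lemma max_toFinset (hL : IsPiles L) {B : List ℕ} (hB : B ∈ L) : B.toFinset.max = pileTop B :=
  PatienceSorting.max_toFinset (hL.1 B hB).1 (hL.1 B hB).2

lemma pairwise_map_toFinset (hL : IsPiles L) :
    (L.map List.toFinset).Pairwise (fun A C => C.max < A.max) :=
  List.pairwise_map.2 <| (List.pairwise_map.1 hL.2).imp_of_mem fun hB hC h => by
    rw [hL.max_toFinset hB, hL.max_toFinset hC]
    exact_mod_cast h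

lemma nodup_map_toFinset (hL : IsPiles L) : (L.map List.toFinset).Nodup :=
  hL.pairwise_map_toFinset.imp fun h hAC => (hAC ▸ h).false

lemma pileTop_lt_of_mem_right {P Q : List (List ℕ)} {B C : List ℕ} (hL : IsPiles (P ++ B :: Q))
    (hC : C ∈ Q) : pileTop C < pileTop B := by
  have htops := hL.2
  simp only [List.map_append, List.map_cons, List.pairwise_append, List.pairwise_cons,
    List.mem_map] at htops
  exact htops.2.1.1 _ ⟨C, hC, rfl⟩

end IsPiles

def blocks (L : List (List ℕ)) : Finset (Finset ℕ) := (L.map List.toFinset).toFinset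

lemma mem_blocks {L : List (List ℕ)} {A : Finset ℕ} :
    A ∈ blocks L ↔ ∃ B ∈ L, B.toFinset = A := by
  simp [blocks]

lemma blocks_append_cons (P Q : List (List ℕ)) (B : List ℕ) :
    blocks (P ++ B :: Q) = insert B.toFinset (blocks (P ++ Q)) := by
  ext A
  simp only [mem_blocks, Finset.mem_insert, List.mem_append, List.mem_cons]
  grind

lemma PSAinsert_blocks {z : ℕ} {L : List (List ℕ)} (hL : IsPiles L) :
    PSAinsert z (blocks L) = blocks (pileInsert z L) := by
  rcases forall_not_lt_or_exists_append_cons z L with h | ⟨P, B, Q, rfl, hP, hB⟩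
  · rw [pileInsert_of_forall_not_lt h, PSAinsert_of_forall_not_lt]
    · simpa using (blocks_append_cons L [] [z]).symm
    · intro A hA
      obtain ⟨C, hC, rfl⟩ := mem_blocks.1 hA
      rw [hL.max_toFinset hC]
      exact_mod_cast h C hC
  · have hBL : B ∈ P ++ B :: Q := by simp
    have hBnew : B.toFinset ∉ blocks (P ++ Q) := by
      have := List.nodup_middle.1 (List.map_append ▸ hL.nodup_map_toFinset)
      simpa [blocks] using (List.nodup_cons.1 this).1
    rw [pileInsert_append_cons hP hB, PSAinsert_of_max_lt (B := B.toFinset), blocks_append_cons,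
      Finset.erase_insert hBnew, blocks_append_cons, List.toFinset_cons]
    · exact blocks_append_cons P Q B ▸ Finset.mem_insert_self _ _
    · rw [hL.max_toFinset hBL]
      exact_mod_cast hB
    · intro A hA hAz hAB
      obtain ⟨C, hC, rfl⟩ := mem_blocks.1 hA
      rw [hL.max_toFinset hC] at hAz ⊢
      rw [hL.max_toFinset hBL]
      have hCz : pileTop C < z := by exact_mod_cast hAz
      simp only [List.mem_append, List.mem_cons] at hC
      rcases hC with hC | rfl | hC
      · exact absurd hCz (hP C hC)
      · exact absurd rfl hAB
      · exact_mod_cast hL.pileTop_lt_of_mem_right hC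

lemma PSA_concat (v : List ℕ) (z : ℕ) : PSA (v ++ [z]) = PSAinsert z (PSA v) := by
  simp [PSA]

lemma PSA_eq_blocks_piles {w : List ℕ} (hw : w.Nodup) : PSA w = blocks (piles w) := by
  induction w using List.reverseRecOn with
  | nil => rfl
  | append_singleton v z ih =>
    have hv : v.Nodup := (List.nodup_append.1 hw).1
    rw [PSA_concat, piles_concat, ih hv, PSAinsert_blocks (isPiles_piles hv)]

lemma IsPiles.eq_of_blocks_eq {L L' : List (List ℕ)} (hL : IsPiles L) (hL' : IsPiles L')
    (h : blocks L = blocks L') : L = L' := by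
  have hmap : L.map List.toFinset = L'.map List.toFinset :=
    (List.perm_of_nodup_nodup_toFinset_eq hL.nodup_map_toFinset hL'.nodup_map_toFinset
      h).eq_of_pairwise (fun _ _ _ _ h₁ h₂ => (h₁.trans h₂).false.elim)
      hL.pairwise_map_toFinset hL'.pairwise_map_toFinset
  have hsort : ∀ M, IsPiles M → (M.map List.toFinset).map (Finset.sort · (· ≥ ·)) = M := by
    intro M hM
    rw [List.map_map]
    conv_rhs => rw [← List.map_id M]
    refine List.map_congr_left fun B hB => ?_
    have hBdec := (hM.1 B hB).2
    exact (List.toFinset_sort _ hBdec.nodup).2 (hBdec.imp le_of_lt)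
  rw [← hsort L hL, hmap, hsort L' hL']

instance : Trans BellCongr BellCongr BellCongr := ⟨Relation.EqvGen.trans _ _ _⟩

lemma BellCongr.append_right {v v' : List ℕ} (h : BellCongr v v') (s : List ℕ) :
    BellCongr (v ++ s) (v' ++ s) := by
  induction h with
  | rel _ _ h =>
    obtain ⟨x, y, u, a, b, c, hab, hbc, hu, rfl, rfl⟩ := h
    exact .rel _ _ ⟨x, y ++ s, u, a, b, c, hab, hbc, hu, by simp, by simp⟩
  | refl => exact .refl _
  | symm _ _ _ ih => exact .symm _ _ ih
  | trans _ _ _ _ _ ih₁ ih₂ => exact .trans _ _ _ ih₁ ih₂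

lemma bellCongr_append_cons_concat {b z : ℕ} (hbz : b < z) (x : List ℕ) {t : List ℕ}
    (ht : ∀ m ∈ t, m < b) : BellCongr (x ++ b :: t ++ [z]) (x ++ b :: z :: t) := by
  induction t using List.reverseRecOn with
  | nil => rw [List.append_assoc]; exact .refl _
  | append_singleton t m ih =>
    have hm : m < b := ht m (by simp)
    have hstep : BellStep (x ++ b :: t ++ [z, m]) (x ++ b :: t ++ [m, z]) :=
      ⟨x, [], t, m, b, z, hm, hbz, fun q hq => ht q (by simp [hq]), rfl, rfl⟩
    calc x ++ b :: (t ++ [m]) ++ [z] = x ++ b :: t ++ [m, z] := by simp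
      BellCongr _ (x ++ b :: t ++ [z, m]) := .symm _ _ (.rel _ _ hstep)
      _ = x ++ b :: t ++ [z] ++ [m] := by simp
      BellCongr _ (x ++ b :: z :: t ++ [m]) :=
        BellCongr.append_right (ih fun q hq => ht q (by simp [hq])) [m]
      _ = x ++ b :: z :: (t ++ [m]) := by simp

def readingWord (L : List (List ℕ)) : List ℕ := (L.map List.reverse).flatten

@[simp] lemma readingWord_cons (B : List ℕ) (L : List (List ℕ)) :
    readingWord (B :: L) = B.reverse ++ readingWord L := rfl

@[simp] lemma readingWord_append (P Q : List (List ℕ)) :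
    readingWord (P ++ Q) = readingWord P ++ readingWord Q := by
  simp [readingWord]

lemma readingWord_singleton (B : List ℕ) : readingWord [B] = B.reverse := by
  simp [readingWord]

lemma bellCongr_readingWord_pileInsert {z : ℕ} {L : List (List ℕ)} (hL : IsPiles L) :
    BellCongr (readingWord L ++ [z]) (readingWord (pileInsert z L)) := by
  rcases forall_not_lt_or_exists_append_cons z L with h | ⟨P, B, Q, rfl, hP, hB⟩
  · rw [pileInsert_of_forall_not_lt h, readingWord_append, readingWord_singleton,
      List.reverse_singleton]
    exact .refl _
  · obtain ⟨b, B, rfl⟩ := List.exists_cons_of_ne_nil (hL.1 B (by simp)).1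
    have hQb : ∀ m ∈ readingWord Q, m < b := by
      simp only [readingWord, List.mem_flatten, List.mem_map]
      rintro m ⟨_, ⟨C, hC, rfl⟩, hm⟩
      exact (le_pileTop (hL.1 C (by simp [hC])).2 (List.mem_reverse.1 hm)).trans_lt
        (hL.pileTop_lt_of_mem_right hC)
    rw [pileInsert_append_cons hP hB]
    simpa using bellCongr_append_cons_concat hB (readingWord P ++ B.reverse) hQb

lemma bellCongr_readingWord_piles {w : List ℕ} (hw : w.Nodup) :
    BellCongr w (readingWord (piles w)) := by
  induction w using List.reverseRecOn with
  | nil => exact .refl _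
  | append_singleton v z ih =>
    have hv : v.Nodup := (List.nodup_append.1 hw).1
    calc BellCongr (v ++ [z]) (readingWord (piles v) ++ [z]) :=
          BellCongr.append_right (ih hv) [z]
      BellCongr _ (readingWord (piles (v ++ [z]))) :=
        piles_concat v z ▸ bellCongr_readingWord_pileInsert (isPiles_piles hv)

theorem bellCongr_iff_piles_eq {v w : List ℕ} (hv : v.Nodup) (hw : w.Nodup) :
    BellCongr v w ↔ piles v = piles w := by
  refine ⟨fun h => piles_eq_of_bellCongr h hv, fun h => ?_⟩
  calc BellCongr v (readingWord (piles v)) := bellCongr_readingWord_piles hv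
    _ = readingWord (piles w) := by rw [h]
    BellCongr _ w := .symm _ _ (bellCongr_readingWord_piles hw)

theorem PSA_eq_iff_piles_eq {v w : List ℕ} (hv : v.Nodup) (hw : w.Nodup) :
    PSA v = PSA w ↔ piles v = piles w := by
  rw [PSA_eq_blocks_piles hv, PSA_eq_blocks_piles hw]
  exact ⟨(isPiles_piles hv).eq_of_blocks_eq (isPiles_piles hw), congrArg blocks⟩

end PatienceSorting

/-- Two permutations of `{1,…,n}` (written as words) are Bell congruent if and only if
they have the same image under the patience sorting algorithm. -/
theorem bellCongr_iff_PSA_eq (n : ℕ) (σ τ : List ℕ)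
    (hσ : σ.Perm ((List.range n).map (· + 1)))
    (hτ : τ.Perm ((List.range n).map (· + 1))) :
    BellCongr σ τ ↔ PSA σ = PSA τ := by
  have hn : ((List.range n).map (· + 1)).Nodup := (List.nodup_range).map (add_left_injective 1)
  have hσn := hσ.nodup_iff.2 hn
  have hτn := hτ.nodup_iff.2 hn
  rw [PatienceSorting.bellCongr_iff_piles_eq hσn hτn, PatienceSorting.PSA_eq_iff_piles_eq hσn hτn]
end

section
/- Every Bell congruence class of permutations of S_n has a greatest element for the right weak order; this greatest element avoids the dashed pattern 21-3, and the map sending a class to its greatest element is a bijection from the set of Bell congruence classes of S_n onto the set of permutations of S_n avoiding the dashed pattern 21-3. -/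
/-- A covering step of the right weak order: exchange two adjacent letters `a < b`,
from `…ab…` to `…ba…`. -/
def WeakStep (σ τ : List ℕ) : Prop :=
  ∃ (x y : List ℕ) (a b : ℕ), a < b ∧ σ = x ++ a :: b :: y ∧ τ = x ++ b :: a :: y

/-- The right weak order on permutations written as words. -/
def WeakLE : List ℕ → List ℕ → Prop := Relation.ReflTransGen WeakStep

open Relation

def bellInsert : List ℕ → ℕ → List ℕ
  | [], z => [z]
  | h :: t, z => if (∀ x ∈ t, x < h) ∧ h < z then h :: z :: t else h :: bellInsert t z

def bellNF (w : List ℕ) : List ℕ := w.foldl bellInsert []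

lemma bellInsert_cons_of_forall_lt {h z : ℕ} {t : List ℕ} (ht : ∀ x ∈ t, x < h)
    (hz : h < z) :
    bellInsert (h :: t) z = h :: z :: t :=
  if_pos ⟨ht, hz⟩

lemma bellInsert_cons_of_not {h z : ℕ} {t : List ℕ} (hn : ¬ ((∀ x ∈ t, x < h) ∧ h < z)) :
    bellInsert (h :: t) z = h :: bellInsert t z :=
  if_neg hn

lemma mem_bellInsert {x z : ℕ} {v : List ℕ} : x ∈ bellInsert v z ↔ x = z ∨ x ∈ v := by
  induction v with
  | nil => simp [bellInsert]
  | cons h t ih =>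
    unfold bellInsert
    split_ifs <;> simp [ih] <;> tauto

lemma bellInsert_cons_of_lt {b z : ℕ} (hz : z < b) (t : List ℕ) :
    bellInsert (b :: t) z = b :: bellInsert t z :=
  bellInsert_cons_of_not fun h => hz.not_gt h.2

lemma bellInsert_append_cons_of_lt {b z : ℕ} (hz : z < b) (v₁ v₂ : List ℕ) :
    bellInsert (v₁ ++ b :: v₂) z = v₁ ++ b :: bellInsert v₂ z := by
  induction v₁ with
  | nil => exact bellInsert_cons_of_lt hz v₂
  | cons h v₁ ih =>
    rw [List.cons_append, bellInsert_cons_of_not, ih, List.cons_append]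
    exact fun H => hz.not_gt ((H.1 b (by simp)).trans H.2)

def IsRightToLeftMax (b : ℕ) (v : List ℕ) : Prop :=
  ∃ v₁ v₂, v = v₁ ++ b :: v₂ ∧ ∀ x ∈ v₂, x < b

lemma isRightToLeftMax_bellInsert_self (v : List ℕ) (b : ℕ) :
    IsRightToLeftMax b (bellInsert v b) := by
  induction v with
  | nil => exact ⟨[], [], rfl, by simp⟩
  | cons h t ih =>
    unfold bellInsert
    split_ifs with hc
    · exact ⟨[h], t, rfl, fun x hx => (hc.1 x hx).trans hc.2⟩
    · obtain ⟨v₁, v₂, hv, hlt⟩ := ih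
      exact ⟨h :: v₁, v₂, by rw [hv, List.cons_append], hlt⟩

lemma IsRightToLeftMax.bellInsert_of_lt {b z : ℕ} {v : List ℕ} (hv : IsRightToLeftMax b v)
    (hz : z < b) : IsRightToLeftMax b (bellInsert v z) := by
  obtain ⟨v₁, v₂, rfl, hlt⟩ := hv
  refine ⟨v₁, bellInsert v₂ z, bellInsert_append_cons_of_lt hz v₁ v₂, fun x hx => ?_⟩
  rcases mem_bellInsert.1 hx with rfl | hx
  exacts [hz, hlt x hx]

lemma IsRightToLeftMax.foldl_bellInsert {b : ℕ} {v : List ℕ} (hv : IsRightToLeftMax b v)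
    (u : List ℕ) (hu : ∀ z ∈ u, z < b) : IsRightToLeftMax b (u.foldl bellInsert v) := by
  induction u generalizing v with
  | nil => exact hv
  | cons z u ih =>
    exact ih (hv.bellInsert_of_lt (hu z (by simp))) fun x hx => hu x (by simp [hx])

lemma bellInsert_bellInsert_comm {a b c : ℕ} (hab : a < b) (hbc : b < c) {v : List ℕ}
    (hv : IsRightToLeftMax b v) :
    bellInsert (bellInsert v c) a = bellInsert (bellInsert v a) c := by
  obtain ⟨v₁, v₂, rfl, hlt⟩ := hv
  induction v₁ with
  | nil =>
    have hins : ∀ x ∈ bellInsert v₂ a, x < b := fun x hx => by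
      rcases mem_bellInsert.1 hx with rfl | hx
      exacts [hab, hlt x hx]
    rw [List.nil_append, bellInsert_cons_of_forall_lt hlt hbc, bellInsert_cons_of_lt hab,
      bellInsert_cons_of_lt (hab.trans hbc), bellInsert_cons_of_lt hab,
      bellInsert_cons_of_forall_lt hins hbc]
  | cons h t ih =>
    set s := t ++ b :: v₂
    have hbs : b ∈ s := by simp [s]
    by_cases hc : (∀ x ∈ s, x < h) ∧ h < c
    · have hbh := hc.1 b hbs
      have hins : ∀ x ∈ bellInsert s a, x < h := fun x hx => by
        rcases mem_bellInsert.1 hx with rfl | hx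
        exacts [hab.trans hbh, hc.1 x hx]
      rw [List.cons_append, bellInsert_cons_of_forall_lt hc.1 hc.2,
        bellInsert_cons_of_not fun H => (H.1 c (by simp)).not_gt hc.2,
        bellInsert_cons_of_lt (hab.trans hbc), bellInsert_cons_of_lt (hab.trans hbh),
        bellInsert_cons_of_forall_lt hins hc.2]
    · have hna : ¬ ((∀ x ∈ s, x < h) ∧ h < a) := fun H => hc ⟨H.1, H.2.trans (hab.trans hbc)⟩
      have hc' : ¬ ((∀ x ∈ bellInsert s a, x < h) ∧ h < c) := fun H =>
        hc ⟨fun x hx => H.1 x (mem_bellInsert.2 (Or.inr hx)), H.2⟩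
      have ha' : ¬ ((∀ x ∈ bellInsert s c, x < h) ∧ h < a) := fun H =>
        hna ⟨fun x hx => H.1 x (mem_bellInsert.2 (Or.inr hx)), H.2⟩
      rw [List.cons_append, bellInsert_cons_of_not hc, bellInsert_cons_of_not hna,
        bellInsert_cons_of_not ha', bellInsert_cons_of_not hc', ih]

lemma bellNF_eq_of_bellStep {w w' : List ℕ} (h : BellStep w w') : bellNF w = bellNF w' := by
  obtain ⟨x, y, u, a, b, c, hab, hbc, hu, rfl, rfl⟩ := h
  have hv : IsRightToLeftMax b ((x ++ b :: u).foldl bellInsert []) := by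
    rw [← List.singleton_append, ← List.append_assoc, List.foldl_append, List.foldl_append]
    exact (isRightToLeftMax_bellInsert_self _ b).foldl_bellInsert u hu
  simp only [bellNF, List.append_assoc, List.cons_append, List.foldl_append, List.foldl_cons]
    at hv ⊢
  rw [bellInsert_bellInsert_comm hab hbc hv]

lemma bellNF_eq_of_bellCongr {w w' : List ℕ} (h : BellCongr w w') : bellNF w = bellNF w' :=
  (eq_equivalence.comap bellNF).eqvGen_iff.1 (h.mono fun _ _ => bellNF_eq_of_bellStep)

lemma BellStep.cons {s t : List ℕ} (r : ℕ) (h : BellStep s t) : BellStep (r :: s) (r :: t) := by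
  obtain ⟨x, y, u, a, b, c, hab, hbc, hu, rfl, rfl⟩ := h
  exact ⟨r :: x, y, u, a, b, c, hab, hbc, hu, rfl, rfl⟩

lemma BellStep.append_right {s t : List ℕ} (r : List ℕ) (h : BellStep s t) :
    BellStep (s ++ r) (t ++ r) := by
  obtain ⟨x, y, u, a, b, c, hab, hbc, hu, rfl, rfl⟩ := h
  exact ⟨x, y ++ r, u, a, b, c, hab, hbc, hu, by simp, by simp⟩

lemma reflTransGen_bellStep_move {h z : ℕ} (hz : h < z) (t y : List ℕ)
    (ht : ∀ x ∈ t, x < h) :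
    ReflTransGen BellStep (h :: z :: (t ++ y)) (h :: (t ++ z :: y)) := by
  induction t using List.reverseRecOn generalizing y with
  | nil => exact .refl
  | append_singleton t p ih =>
    have hp : p < h := ht p (by simp)
    have step : BellStep (h :: (t ++ z :: p :: y)) (h :: (t ++ p :: z :: y)) :=
      ⟨[], y, t, p, h, z, hp, hz, fun x hx => ht x (by simp [hx]), by simp, by simp⟩
    simpa using (ih (p :: y) fun x hx => ht x (by simp [hx])).tail step

lemma reflTransGen_bellStep_bellInsert (v : List ℕ) (z : ℕ) :
    ReflTransGen BellStep (bellInsert v z) (v ++ [z]) := by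
  induction v with
  | nil => exact .refl
  | cons h t ih =>
    unfold bellInsert
    split_ifs with hc
    · simpa using reflTransGen_bellStep_move hc.2 t [] hc.1
    · exact ih.lift (h :: ·) fun _ _ => BellStep.cons h

lemma reflTransGen_bellStep_bellNF (w : List ℕ) : ReflTransGen BellStep (bellNF w) w := by
  induction w using List.reverseRecOn with
  | nil => exact .refl
  | append_singleton w z ih =>
    rw [bellNF, List.foldl_append, List.foldl_cons, List.foldl_nil]
    exact (reflTransGen_bellStep_bellInsert (bellNF w) z).trans
      (ih.lift (· ++ [z]) fun _ _ => BellStep.append_right [z])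

lemma BellStep.weakStep {s t : List ℕ} (h : BellStep s t) : WeakStep t s := by
  obtain ⟨x, y, u, a, b, c, hab, hbc, -, rfl, rfl⟩ := h
  exact ⟨x ++ b :: u, y, a, c, hab.trans hbc, by simp, by simp⟩

lemma weakLE_bellNF (w : List ℕ) : WeakLE w (bellNF w) :=
  reflTransGen_swap.2 <|
    ReflTransGen.mono (fun _ _ => BellStep.weakStep) _ _ (reflTransGen_bellStep_bellNF w)

lemma bellCongr_bellNF (w : List ℕ) : BellCongr w (bellNF w) :=
  EqvGen.symm _ _ <|
    EqvGen.reflTransGen_le_eqvGen (r := BellStep) _ _ (reflTransGen_bellStep_bellNF w)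

def inversions : List ℕ → ℕ
  | [] => 0
  | h :: t => t.countP (· < h) + inversions t

lemma inversions_of_weakStep {s t : List ℕ} (h : WeakStep s t) :
    inversions t = inversions s + 1 := by
  obtain ⟨x, y, a, b, hab, rfl, rfl⟩ := h
  induction x with
  | nil => simp [inversions, hab, hab.not_gt]; omega
  | cons r x ih =>
    have hperm : (x ++ b :: a :: y).Perm (x ++ a :: b :: y) := .append_left x (.swap a b y)
    simp only [List.cons_append, inversions, hperm.countP_eq, ih]
    omega

lemma inversions_le_of_weakLE {s t : List ℕ} (h : WeakLE s t) : inversions s ≤ inversions t := by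
  induction h with
  | refl => rfl
  | tail _ hst ih => rw [inversions_of_weakStep hst]; omega

lemma weakLE_antisymm {s t : List ℕ} (h₁ : WeakLE s t) (h₂ : WeakLE t s) : s = t := by
  rcases h₁.cases_head with rfl | ⟨m, hsm, hmt⟩
  · rfl
  · have := inversions_of_weakStep hsm
    have := inversions_le_of_weakLE hmt
    have := inversions_le_of_weakLE h₂
    omega

def Contains21dash3 (w : List ℕ) : Prop :=
  ∃ x d e y, w = x ++ d :: e :: y ∧ e < d ∧ ∃ f ∈ y, d < f

lemma not_avoids21dash3_iff {w : List ℕ} : ¬ Avoids21dash3 w ↔ Contains21dash3 w := by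
  rw [Avoids21dash3, not_not]
  constructor
  · rintro ⟨p, q, hpq, hq, hed, hdf⟩
    have hp : p < w.length := by omega
    have hp1 : p + 1 < w.length := by omega
    rw [List.getD_eq_getElem _ _ hp, List.getD_eq_getElem _ _ hp1] at hed
    rw [List.getD_eq_getElem _ _ hp, List.getD_eq_getElem _ _ hq] at hdf
    refine ⟨w.take p, w[p], w[p + 1], w.drop (p + 2), ?_, hed, w[q], ?_, hdf⟩
    · rw [← List.drop_eq_getElem_cons hp1, ← List.drop_eq_getElem_cons hp, List.take_append_drop]
    · rw [List.mem_iff_getElem]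
      exact ⟨q - (p + 2), by simp; omega, by simp; congr; omega⟩
  · rintro ⟨x, d, e, y, rfl, hed, f, hf, hdf⟩
    obtain ⟨i, hi, rfl⟩ := List.getElem_of_mem hf
    refine ⟨x.length, x.length + (i + 2), by omega, by simp; omega, ?_, ?_⟩
    · simp [hed]
    · simp [hi, hdf]

lemma BellStep.contains21dash3 {w w' : List ℕ} (h : BellStep w' w) : Contains21dash3 w := by
  obtain ⟨x, y, u, a, b, c, hab, hbc, hu, -, rfl⟩ := h
  cases u with
  | nil => exact ⟨x, b, a, c :: y, by simp, hab, c, by simp, hbc⟩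
  | cons e u => exact ⟨x, b, e, u ++ a :: c :: y, by simp, hu e (by simp), c, by simp, hbc⟩

lemma exists_eq_append_of_exists_gt {d e : ℕ} {y : List ℕ} (he : e < d) (hd : d ∉ y)
    (hy : ∃ f ∈ y, d < f) :
    ∃ u a c z, e :: y = u ++ a :: c :: z ∧ (∀ x ∈ u, x < d) ∧ a < d ∧ d < c := by
  induction y generalizing e with
  | nil => simp at hy
  | cons g y ih =>
    rcases lt_or_gt_of_ne (List.ne_of_not_mem_cons hd).symm with hg | hg
    · obtain ⟨f, hf, hdf⟩ := hy
      have hfy : f ∈ y := (List.mem_cons.1 hf).resolve_left (hg.trans hdf).ne'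
      obtain ⟨u, a, c, z, hyz, hu, ha, hc⟩ :=
        ih hg (List.not_mem_of_not_mem_cons hd) ⟨f, hfy, hdf⟩
      refine ⟨e :: u, a, c, z, by rw [hyz, List.cons_append], ?_, ha, hc⟩
      simpa [he] using hu
    · exact ⟨[], e, g, y, rfl, by simp, he, hg⟩

lemma exists_bellStep_of_contains21dash3 {w : List ℕ} (hw : w.Nodup)
    (h : Contains21dash3 w) :
    ∃ w', BellStep w' w := by
  obtain ⟨x, d, e, y, rfl, hed, hy⟩ := h
  have hd : d ∉ y := fun hdy =>
    (List.nodup_cons.1 (List.nodup_append.1 hw).2.1).1 (List.mem_cons_of_mem e hdy)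
  obtain ⟨u, a, c, z, hyz, hu, ha, hc⟩ := exists_eq_append_of_exists_gt hed hd hy
  exact ⟨x ++ d :: u ++ c :: a :: z, x, z, u, a, d, c, ha, hc, hu, rfl, by simp [hyz]⟩

lemma BellStep.perm {w w' : List ℕ} (h : BellStep w w') : w.Perm w' := by
  obtain ⟨x, y, u, a, b, c, -, -, -, rfl, rfl⟩ := h
  simpa using (List.Perm.swap a c y).append_left (x ++ b :: u)

lemma BellCongr.perm {w w' : List ℕ} (h : BellCongr w w') : w.Perm w' :=
  (List.Perm.eqv _).eqvGen_iff.1 (h.mono fun _ _ => BellStep.perm)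

def IsBellGreatest (σ μ : List ℕ) : Prop :=
  BellCongr σ μ ∧ ∀ ρ, BellCongr σ ρ → WeakLE ρ μ

lemma isBellGreatest_bellNF (σ : List ℕ) : IsBellGreatest σ (bellNF σ) :=
  ⟨bellCongr_bellNF σ, fun ρ h => bellNF_eq_of_bellCongr h ▸ weakLE_bellNF ρ⟩

lemma IsBellGreatest.unique {σ μ μ' : List ℕ} (h : IsBellGreatest σ μ)
    (h' : IsBellGreatest σ μ') : μ = μ' :=
  weakLE_antisymm (h'.2 μ h.1) (h.2 μ' h'.1)

lemma IsBellGreatest.avoids21dash3 {σ μ : List ℕ} (hσ : σ.Nodup) (h : IsBellGreatest σ μ) :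
    Avoids21dash3 μ := by
  by_contra hμ
  obtain ⟨w, hw⟩ := exists_bellStep_of_contains21dash3 (h.1.perm.nodup_iff.1 hσ)
    (not_avoids21dash3_iff.1 hμ)
  have hle := h.2 w (EqvGen.trans _ _ _ h.1 (EqvGen.symm _ _ (EqvGen.rel _ _ hw)))
  have := inversions_of_weakStep hw.weakStep
  have := inversions_le_of_weakLE hle
  omega

lemma bellNF_eq_self_of_avoids21dash3 {μ : List ℕ} (h : Avoids21dash3 μ) : bellNF μ = μ := by
  rcases (reflTransGen_bellStep_bellNF μ).cases_tail with heq | ⟨w, -, hw⟩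
  · exact heq.symm
  · exact absurd h (not_avoids21dash3_iff.2 hw.contains21dash3)

lemma isBellGreatest_self_of_avoids21dash3 {μ : List ℕ} (h : Avoids21dash3 μ) :
    IsBellGreatest μ μ := by
  simpa only [bellNF_eq_self_of_avoids21dash3 h] using isBellGreatest_bellNF μ

/-- Every Bell congruence class of permutations of `{1,…,n}` has a unique greatest
element for the right weak order, this greatest element avoids the dashed pattern
`21-3`, and every `21-3`-avoiding permutation is the greatest element of its own Bell
class; hence the map sending a class to its greatest element is a bijection from the
Bell classes of `S_n` onto the `21-3`-avoiding permutations of `S_n`. -/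
theorem bell_class_greatest_element (n : ℕ) :
    (∀ σ : List ℕ, σ.Perm ((List.range n).map (· + 1)) →
      ∃! μ : List ℕ, BellCongr σ μ ∧ ∀ ρ : List ℕ, BellCongr σ ρ → WeakLE ρ μ) ∧
    (∀ σ μ : List ℕ, σ.Perm ((List.range n).map (· + 1)) →
      BellCongr σ μ → (∀ ρ : List ℕ, BellCongr σ ρ → WeakLE ρ μ) →
      Avoids21dash3 μ) ∧
    (∀ μ : List ℕ, μ.Perm ((List.range n).map (· + 1)) → Avoids21dash3 μ →
      ∀ ρ : List ℕ, BellCongr μ ρ → WeakLE ρ μ) := by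
  have hnodup : ∀ σ : List ℕ, σ.Perm ((List.range n).map (· + 1)) → σ.Nodup := fun σ hσ =>
    hσ.nodup_iff.2 (List.nodup_range.map (add_left_injective 1))
  exact ⟨fun σ _ => ⟨bellNF σ, isBellGreatest_bellNF σ,
      fun μ hμ => IsBellGreatest.unique hμ (isBellGreatest_bellNF σ)⟩,
    fun σ μ hσ hc hg => IsBellGreatest.avoids21dash3 (hnodup σ hσ) ⟨hc, hg⟩,
    fun μ _ hav => (isBellGreatest_self_of_avoids21dash3 hav).2⟩
end

section
/- For every set partition S of a finite set of integers, the Bell poset P(S) is regular: for all elements x, z of the underlying set with x <_P z, and every element y of the underlying set satisfying either x < y < z or x > y > z in the usual integer order, one has x <_P y or y <_P z. -/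
/-- The generating relations of the Bell poset `P(S)`: `bellBase S y x` holds when
either `x, y` lie in the same block and `y` is the greatest element of that block
smaller than `x`, or `x` lies in a block `B`, `y` lies in the block `B'` immediately
to the left of `B` (the block whose maximum is least among those greater than the
maximum of `B`), and `y` is the smallest element of `B'` greater than `x`. -/
def bellBase (S : Finset (Finset ℕ)) (y x : ℕ) : Prop :=
  (∃ B ∈ S, x ∈ B ∧ y ∈ B ∧ y < x ∧ ∀ z ∈ B, z < x → z ≤ y) ∨
  (∃ B ∈ S, ∃ B' ∈ S, x ∈ B ∧ y ∈ B' ∧ B.max < B'.max ∧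
    (∀ C ∈ S, B.max < C.max → B'.max ≤ C.max) ∧
    x < y ∧ ∀ z ∈ B', x < z → y ≤ z)

/-- The order relation `<_P` of the Bell poset `P(S)`: the transitive closure of the
generating relations. -/
def bellLT (S : Finset (Finset ℕ)) : ℕ → ℕ → Prop :=
  Relation.TransGen (bellBase S)

/-!
Regularity of a transitive closure follows from regularity of its generating steps, since a
point strictly between `x` and `z`, for `x <_P b ⋖ z`, equals `b` or lies strictly between `x`
and `b` or between `b` and `z`. For a generating step, `y` cannot lie in the block of the
relevant endpoint, and disjoint blocks have distinct maxima, so the block of `y` lies to the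
left or to the right of it. The key fact is then a descent: if `y ∈ C` and `x ∈ B` with `B` to
the left of `C`, and `x` is at most every element of `B` above `y`, then `x <_P y`. Indeed the
least element above `y` of the block next to the left of `C` is covered by `y`; repeating this
walks block by block to `B`, arriving at an element `u ≥ x` of `B`, and within a block the
order of `P(S)` contains the integer order.
-/

theorem Finset.injOn_max_of_disjoint {α : Type*} [LinearOrder α] {S : Finset (Finset α)}
    (hdisj : ∀ B ∈ S, ∀ C ∈ S, B ≠ C → Disjoint B C) :
    Set.InjOn Finset.max (S : Set (Finset α)) := by
  intro B hB C hC hBC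
  by_contra hne
  cases hm : B.max with
  | bot => exact hne ((Finset.max_eq_bot.mp hm).trans (Finset.max_eq_bot.mp (hBC ▸ hm)).symm)
  | coe a =>
    exact Finset.disjoint_left.mp (hdisj B hB C hC hne) (Finset.mem_of_max hm)
      (Finset.mem_of_max (hBC ▸ hm))

theorem Relation.transGen_or_of_between {α : Type*} [LinearOrder α] {r : α → α → Prop}
    {p : α → Prop}
    (hr : ∀ ⦃x y z⦄, r x z → p y → (x < y ∧ y < z) ∨ (z < y ∧ y < x) →
      TransGen r x y ∨ TransGen r y z)
    {x y z : α} (hxz : TransGen r x z) (hy : p y)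
    (hxyz : (x < y ∧ y < z) ∨ (z < y ∧ y < x)) :
    TransGen r x y ∨ TransGen r y z := by
  induction hxz with
  | single h => exact hr h hy hxyz
  | @tail b c hxb hbc ih =>
    by_cases hyb : y = b
    · exact .inl (hyb ▸ hxb)
    obtain hxyb | hbyc :
        ((x < y ∧ y < b) ∨ (b < y ∧ y < x)) ∨ ((b < y ∧ y < c) ∨ (c < y ∧ y < b)) := by
      rcases hxyz with ⟨_, _⟩ | ⟨_, _⟩ <;> rcases lt_or_gt_of_ne hyb with _ | _ <;> tauto
    · exact (ih hxyb).imp_right (·.tail hbc)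
    · exact (hr hbc hy hbyc).imp_left hxb.trans

section BellPoset

variable {S : Finset (Finset ℕ)}

theorem reflTransGen_bellBase_of_mem_block {B : Finset ℕ} (hB : B ∈ S) {x : ℕ} (hx : x ∈ B)
    {u : ℕ} (hu : u ∈ B) (hxu : x ≤ u) : Relation.ReflTransGen (bellBase S) x u := by
  induction u using Nat.strong_induction_on with
  | _ u ih =>
  rcases hxu.eq_or_lt with rfl | hxu
  · exact .refl
  have hbelow : (B.filter (· < u)).Nonempty := ⟨x, Finset.mem_filter.mpr ⟨hx, hxu⟩⟩
  obtain ⟨hvB, hvu⟩ := Finset.mem_filter.mp ((B.filter (· < u)).max'_mem hbelow)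
  have hle : ∀ w ∈ B, w < u → w ≤ (B.filter (· < u)).max' hbelow :=
    fun w hw hwu => (B.filter (· < u)).le_max' w (Finset.mem_filter.mpr ⟨hw, hwu⟩)
  exact .tail (ih _ hvu hvB (hle x hx hxu)) (.inl ⟨B, hB, hu, hvB, hvu, hle⟩)

theorem exists_bellBase_of_max_lt {B C : Finset ℕ} (hB : B ∈ S) (hC : C ∈ S) {y : ℕ}
    (hy : y ∈ C) (hCB : C.max < B.max) (hBmin : ∀ D ∈ S, C.max < D.max → B.max ≤ D.max) :
    ∃ u ∈ B, y < u ∧ bellBase S u y := by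
  have habove : (B.filter (y < ·)).Nonempty := by
    obtain ⟨m, hmB, hym⟩ := Finset.lt_sup_iff.mp ((Finset.le_max hy).trans_lt hCB)
    exact ⟨m, Finset.mem_filter.mpr ⟨hmB, WithBot.coe_lt_coe.mp hym⟩⟩
  obtain ⟨huB, hyu⟩ := Finset.mem_filter.mp ((B.filter (y < ·)).min'_mem habove)
  have hle : ∀ w ∈ B, y < w → (B.filter (y < ·)).min' habove ≤ w :=
    fun w hw hyw => (B.filter (y < ·)).min'_le w (Finset.mem_filter.mpr ⟨hw, hyw⟩)
  exact ⟨_, huB, hyu, .inr ⟨C, hC, B, hB, hy, huB, hCB, hBmin, hyu, hle⟩⟩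

theorem bellLT_of_max_lt (hdisj : ∀ B ∈ S, ∀ C ∈ S, B ≠ C → Disjoint B C)
    {B C : Finset ℕ} (hB : B ∈ S) (hC : C ∈ S) {x y : ℕ} (hx : x ∈ B) (hy : y ∈ C)
    (hCB : C.max < B.max) (hxy : ∀ w ∈ B, y < w → x ≤ w) : bellLT S x y := by
  induction hn : (S.filter (C.max < ·.max)).card using Nat.strong_induction_on
    generalizing C y with
  | _ n ih =>
  obtain ⟨B₁, hB₁, hB₁min⟩ := (S.filter (C.max < ·.max)).exists_min_image Finset.max
    ⟨B, Finset.mem_filter.mpr ⟨hB, hCB⟩⟩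
  obtain ⟨hB₁S, hCB₁⟩ := Finset.mem_filter.mp hB₁
  obtain ⟨u, huB₁, hyu, hbase⟩ := exists_bellBase_of_max_lt hB₁S hC hy hCB₁
    fun D hD hCD => hB₁min D (Finset.mem_filter.mpr ⟨hD, hCD⟩)
  by_cases hB₁B : B₁ = B
  · subst hB₁B
    exact .tail' (reflTransGen_bellBase_of_mem_block hB₁S hx huB₁ (hxy u huB₁ hyu)) hbase
  have hB₁B : B₁.max < B.max := (hB₁min B (Finset.mem_filter.mpr ⟨hB, hCB⟩)).lt_of_ne
    ((Finset.injOn_max_of_disjoint hdisj).ne hB₁S hB hB₁B)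
  have hcard : (S.filter (B₁.max < ·.max)).card < n := by
    refine hn ▸ Finset.card_lt_card
      ((Finset.ssubset_iff_of_subset ?_).mpr ⟨B₁, hB₁, by simp⟩)
    intro D hD
    simp only [Finset.mem_filter] at hD ⊢
    exact ⟨hD.1, hCB₁.trans hD.2⟩
  exact .tail (ih _ hcard hB₁S huB₁ hB₁B (fun w hw hyw => hxy w hw (hyu.trans hyw)) rfl) hbase

theorem bellBase_regular (hdisj : ∀ B ∈ S, ∀ C ∈ S, B ≠ C → Disjoint B C) {x y z : ℕ}
    (hstep : bellBase S x z) {C : Finset ℕ} (hC : C ∈ S) (hy : y ∈ C)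
    (hxyz : (x < y ∧ y < z) ∨ (z < y ∧ y < x)) : bellLT S x y ∨ bellLT S y z := by
  have hinj := Finset.injOn_max_of_disjoint hdisj
  rcases id hstep with ⟨B, hB, hzB, hxB, hxz, hxmax⟩ |
    ⟨B, hB, B', hB', hzB, hxB', -, -, hzx, hxmin⟩
  · obtain ⟨hxy, hyz⟩ : x < y ∧ y < z := by omega
    have hCB : C ≠ B := by rintro rfl; exact (hxmax y hy hyz).not_gt hxy
    rcases lt_or_gt_of_ne (hinj.ne hC hB hCB) with h | h
    · exact .inl (bellLT_of_max_lt hdisj hB hC hxB hy h fun w _ hyw => (hxy.trans hyw).le)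
    · exact .inr (bellLT_of_max_lt hdisj hC hB hy hzB h fun w _ hzw => (hyz.trans hzw).le)
  · obtain ⟨hzy, hyx⟩ : z < y ∧ y < x := by omega
    have hCB' : C ≠ B' := by rintro rfl; exact (hxmin y hy hzy).not_gt hyx
    rcases lt_or_gt_of_ne (hinj.ne hC hB' hCB') with h | h
    · exact .inl (bellLT_of_max_lt hdisj hB' hC hxB' hy h
        fun w hw hyw => hxmin w hw (hzy.trans hyw))
    · exact .inr (.tail (bellLT_of_max_lt hdisj hC hB' hy hxB' h
        fun w _ hxw => (hyx.trans hxw).le) hstep)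

end BellPoset

theorem bell_poset_regular_general (S : Finset (Finset ℕ))
    (hdisj : ∀ B ∈ S, ∀ C ∈ S, B ≠ C → Disjoint B C)
    (x y z : ℕ) (hy : y ∈ S.sup id)
    (hxz : bellLT S x z)
    (hbetween : (x < y ∧ y < z) ∨ (z < y ∧ y < x)) :
    bellLT S x y ∨ bellLT S y z := by
  obtain ⟨C, hC, hyC⟩ := Finset.mem_sup.mp hy
  exact Relation.transGen_or_of_between (p := (· ∈ C))
    (fun _ _ _ hstep hyC hb => bellBase_regular hdisj hstep hC hyC hb) hxz hyC hbetween

/-- Bell posets are regular: if `S` is a set partition of a finite set of integers,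
`x <_P z`, and `y` is an element of the ground set with `x < y < z` or `x > y > z`
in the usual integer order, then `x <_P y` or `y <_P z`. -/
theorem bell_poset_regular (S : Finset (Finset ℕ))
    (hne : ∀ B ∈ S, B.Nonempty)
    (hdisj : ∀ B ∈ S, ∀ C ∈ S, B ≠ C → Disjoint B C)
    (x y z : ℕ) (hy : y ∈ S.sup id)
    (hxz : bellLT S x z)
    (hbetween : (x < y ∧ y < z) ∨ (z < y ∧ y < x)) :
    bellLT S x y ∨ bellLT S y z :=
  bell_poset_regular_general S hdisj x y z hy hxz hbetween
end
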